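/- arXiv:1906.00439 — 9 statements merged into one kernel-verified Lean document; each statement's English description precedes it below -/
import Mathlib

section
/- In a truncated archimedean vector lattice G, for every g ≥ 0 and natural number n, (g ∧ n) + (g ⊖ n)̄ = g ∧ (n+1). -/
/-- A truncation on a (lattice-ordered real) vector lattice `G`: a unary operation
`trunc` on the positive cone satisfying the axioms (T1)–(T3). -/
structure Truncation (G : Type*) [AddCommGroup G] [Lattice G] [Module ℝ G] where
  trunc : G → G
  /-- (T1): `g ⊓ h̄ ≤ ḡ ≤ g` for `g, h ≥ 0`. -/
  inf_trunc_le : ∀ g h : G, 0 ≤ g → 0 ≤ h → g ⊓ trunc h ≤ trunc g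
  trunc_le_self : ∀ g : G, 0 ≤ g → trunc g ≤ g
  /-- (T2): if `ḡ = 0` then `g = 0`. -/
  eq_zero_of_trunc_eq_zero : ∀ g : G, 0 ≤ g → trunc g = 0 → g = 0
  /-- (T3): if `n g = (n g)‾` for all `n` then `g = 0`. -/
  eq_zero_of_forall_trunc_eq : ∀ g : G, 0 ≤ g →
    (∀ n : ℕ, (n : ℝ) • g = trunc ((n : ℝ) • g)) → g = 0

namespace Truncation

variable {G : Type*} [AddCommGroup G] [Lattice G] [Module ℝ G]

/-- `g ∧ r := r • (g/r)‾` for real `r > 0` (and `g ∧ 0 := 0`). -/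
noncomputable def wedge (T : Truncation G) (g : G) (r : ℝ) : G :=
  r • T.trunc (r⁻¹ • g)

/-- `g ⊖ r := r • ((g/r) - (g/r)‾)` for real `r > 0`, and `g ⊖ 0 := g`. -/
noncomputable def ominus (T : Truncation G) (g : G) (r : ℝ) : G :=
  if r = 0 then g else r • (r⁻¹ • g - T.trunc (r⁻¹ • g))

end Truncation

/-!
Since `g ⊖ n = g - g ∧ n`, the claim compares `n A + (g - n A)‾` with `(n+1) B`, where
`A = (g/n)‾` and `B = (g/(n+1))‾`. Both inequalities come from the consequence
`x ≤ y, x ≤ w̄ ⟹ x ≤ ȳ` of (T1): the excess `(n+1) B - n A` lies below `A` and below `g - n A`,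
and the average `(n A + (g - n A)‾)/(n+1)` lies below `(g/n ⊔ (g - n A))‾` and below `g/(n+1)`.
Dividing by `n + 1` preserves order because lattice-ordered groups are semiclosed:
`k • a ≤ 0` with `k ≠ 0` forces `a ≤ 0`.
-/

section LatticeOrderedAddGroup

variable {G : Type*} [AddCommGroup G] [Lattice G] [AddLeftMono G] {a b c : G}

theorem inf_add_le_inf_add_inf (ha : 0 ≤ a) (hb : 0 ≤ b) (hc : 0 ≤ c) :
    a ⊓ (b + c) ≤ a ⊓ b + a ⊓ c := by
  rw [inf_add, add_inf, add_inf]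
  refine le_inf (le_inf ?_ ?_) (le_inf ?_ inf_le_right)
  · exact inf_le_left.trans (le_add_of_nonneg_left ha)
  · exact inf_le_left.trans (le_add_of_nonneg_right hc)
  · exact inf_le_left.trans (le_add_of_nonneg_left hb)

theorem inf_nsmul_eq_zero_of_inf_eq_zero (ha : 0 ≤ a) (hb : 0 ≤ b) (hab : a ⊓ b = 0) (k : ℕ) :
    a ⊓ k • b = 0 := by
  induction k with
  | zero => simpa using ha
  | succ k ih =>
    refine le_antisymm ?_ (le_inf ha (nsmul_nonneg hb _))
    calc a ⊓ (k + 1) • b = a ⊓ (k • b + b) := by rw [succ_nsmul]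
      _ ≤ a ⊓ k • b + a ⊓ b := inf_add_le_inf_add_inf ha (nsmul_nonneg hb k) hb
      _ = 0 := by rw [ih, hab, add_zero]

theorem nonpos_of_nsmul_nonpos {k : ℕ} (hk : k ≠ 0) (h : k • a ≤ 0) : a ≤ 0 := by
  obtain ⟨m, rfl⟩ := Nat.exists_eq_succ_of_ne_zero hk
  have hle : a ≤ m • -a := by
    rw [Nat.succ_eq_add_one, succ_nsmul'] at h
    rw [smul_neg]
    exact le_neg_iff_add_nonpos_right.2 h
  have hpos : a⁺ ≤ m • a⁻ :=
    sup_le (hle.trans (nsmul_le_nsmul_right (neg_le_negPart a) m))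
      (nsmul_nonneg (negPart_nonneg a) m)
  have hdisj : a⁺ ⊓ m • a⁻ = 0 :=
    inf_nsmul_eq_zero_of_inf_eq_zero (posPart_nonneg a) (negPart_nonneg a)
      (posPart_inf_negPart_eq_zero a) m
  rwa [inf_eq_left.2 hpos, posPart_eq_zero] at hdisj

end LatticeOrderedAddGroup

section Module

variable {G : Type*} [AddCommGroup G] [Lattice G] [AddLeftMono G] [Module ℝ G] {a b g : G}

theorem natCast_smul_le_natCast_smul (k : ℕ) (hab : a ≤ b) : (k : ℝ) • a ≤ (k : ℝ) • b := by
  simpa only [Nat.cast_smul_eq_nsmul] using nsmul_le_nsmul_right hab k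

theorem inv_natCast_smul_le_inv_natCast_smul (k : ℕ) (hab : a ≤ b) :
    (k : ℝ)⁻¹ • a ≤ (k : ℝ)⁻¹ • b := by
  rcases eq_or_ne k 0 with rfl | hk
  · simp
  have hk' : (k : ℝ) ≠ 0 := Nat.cast_ne_zero.2 hk
  refine sub_nonpos.1 (nonpos_of_nsmul_nonpos hk ?_)
  rw [← Nat.cast_smul_eq_nsmul ℝ, smul_sub, smul_inv_smul₀ hk', smul_inv_smul₀ hk']
  exact sub_nonpos.2 hab

theorem inv_natCast_smul_nonneg (hg : 0 ≤ g) (k : ℕ) : 0 ≤ (k : ℝ)⁻¹ • g := by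
  simpa using inv_natCast_smul_le_inv_natCast_smul k hg

theorem inv_natCast_smul_le_inv_natCast_smul_of_le (hg : 0 ≤ g) {j k : ℕ} (hj : j ≠ 0)
    (hjk : j ≤ k) :
    (k : ℝ)⁻¹ • g ≤ (j : ℝ)⁻¹ • g := by
  have hk : k ≠ 0 := by omega
  have hdiff : (j : ℝ)⁻¹ • g - (k : ℝ)⁻¹ • g = ((k - j : ℕ) : ℝ) • ((j * k : ℕ) : ℝ)⁻¹ • g := by
    rw [← sub_smul, smul_smul]
    congr 1
    push_cast [Nat.cast_sub hjk]
    field_simp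
  refine sub_nonneg.1 (hdiff ▸ ?_)
  simpa using natCast_smul_le_natCast_smul (k - j) (inv_natCast_smul_nonneg hg (j * k))

end Module

namespace Truncation

variable {G : Type*} [AddCommGroup G] [Lattice G] [Module ℝ G] (T : Truncation G) {a b c g : G}

theorem trunc_mono (ha : 0 ≤ a) (hab : a ≤ b) : T.trunc a ≤ T.trunc b := by
  simpa [inf_eq_right.2 ((T.trunc_le_self a ha).trans hab)] using
    T.inf_trunc_le b a (ha.trans hab) ha

theorem le_trunc_of_le_of_le_trunc (hb : 0 ≤ b) (hc : 0 ≤ c) (hab : a ≤ b)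
    (hac : a ≤ T.trunc c) : a ≤ T.trunc b :=
  (le_inf hab hac).trans (T.inf_trunc_le b c hb hc)

theorem ominus_eq_sub_wedge (g : G) (r : ℝ) : T.ominus g r = g - T.wedge g r := by
  rcases eq_or_ne r 0 with rfl | hr
  · simp [ominus, wedge]
  · rw [ominus, if_neg hr, smul_sub, smul_inv_smul₀ hr, wedge]

variable [AddLeftMono G]

theorem wedge_le (hg : 0 ≤ g) (k : ℕ) : T.wedge g k ≤ g := by
  calc T.wedge g k ≤ (k : ℝ) • (k : ℝ)⁻¹ • g :=
        natCast_smul_le_natCast_smul k (T.trunc_le_self _ (inv_natCast_smul_nonneg hg k))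
    _ ≤ g := by
      rcases eq_or_ne k 0 with rfl | hk
      · simpa using hg
      · rw [smul_inv_smul₀ (Nat.cast_ne_zero.2 hk)]

theorem wedge_add_trunc_sub_wedge_le (hg : 0 ≤ g) (n : ℕ) :
    T.wedge g n + T.trunc (g - T.wedge g n) ≤ T.wedge g (n + 1) := by
  set u := (n : ℝ)⁻¹ • g
  set d := g - T.wedge g n
  have hu : 0 ≤ u := inv_natCast_smul_nonneg hg n
  have hd : 0 ≤ d := sub_nonneg.2 (T.wedge_le hg n)
  have hM : ((n + 1 : ℕ) : ℝ) ≠ 0 := Nat.cast_ne_zero.2 n.succ_ne_zero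
  have hsum : T.wedge g n + T.trunc d ≤ ((n + 1 : ℕ) : ℝ) • T.trunc (u ⊔ d) := by
    rw [Nat.cast_succ, add_smul, one_smul]
    exact add_le_add (natCast_smul_le_natCast_smul n (T.trunc_mono hu le_sup_left))
      (T.trunc_mono hd le_sup_right)
  set x := ((n + 1 : ℕ) : ℝ)⁻¹ • (T.wedge g n + T.trunc d)
  have hxv : x ≤ ((n + 1 : ℕ) : ℝ)⁻¹ • g :=
    inv_natCast_smul_le_inv_natCast_smul _ (add_le_of_le_sub_left (T.trunc_le_self d hd))
  have hxt : x ≤ T.trunc (u ⊔ d) := by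
    simpa only [inv_smul_smul₀ hM] using inv_natCast_smul_le_inv_natCast_smul (n + 1) hsum
  have hx : ((n + 1 : ℕ) : ℝ) • x = T.wedge g n + T.trunc d := smul_inv_smul₀ hM _
  rw [← hx, ← Nat.cast_succ]
  exact natCast_smul_le_natCast_smul _ (T.le_trunc_of_le_of_le_trunc
    (inv_natCast_smul_nonneg hg _) (hu.trans le_sup_left) hxv hxt)

theorem wedge_succ_le (hg : 0 ≤ g) (n : ℕ) :
    T.wedge g (n + 1) ≤ T.wedge g n + T.trunc (g - T.wedge g n) := by
  rcases eq_or_ne n 0 with rfl | hn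
  · simp [wedge]
  rw [← Nat.cast_succ]
  set u := (n : ℝ)⁻¹ • g
  have hu : 0 ≤ u := inv_natCast_smul_nonneg hg n
  have hd : 0 ≤ g - T.wedge g n := sub_nonneg.2 (T.wedge_le hg n)
  have hstep : T.wedge g (n + 1 : ℕ) ≤ T.wedge g n + T.trunc u :=
    calc T.wedge g (n + 1 : ℕ) ≤ ((n + 1 : ℕ) : ℝ) • T.trunc u :=
          natCast_smul_le_natCast_smul _ (T.trunc_mono (inv_natCast_smul_nonneg hg (n + 1))
            (inv_natCast_smul_le_inv_natCast_smul_of_le hg hn n.le_succ))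
      _ = T.wedge g n + T.trunc u := by rw [Nat.cast_succ, add_smul, one_smul, wedge]
  exact sub_le_iff_le_add'.1 (T.le_trunc_of_le_of_le_trunc hd hu
    (sub_le_sub_right (T.wedge_le hg (n + 1)) _) (sub_le_iff_le_add'.2 hstep))

end Truncation

theorem stmt5_general {G : Type*} [AddCommGroup G] [Lattice G] [Module ℝ G]
    [CovariantClass G G (· + ·) (· ≤ ·)]
    (T : Truncation G) (g : G) (hg : 0 ≤ g) (n : ℕ) :
    T.wedge g n + T.trunc (T.ominus g n) = T.wedge g (n + 1) := by
  rw [T.ominus_eq_sub_wedge]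
  exact le_antisymm (T.wedge_add_trunc_sub_wedge_le hg n) (T.wedge_succ_le hg n)

/-- In a truncated archimedean vector lattice, `(g ∧ n) + (g ⊖ n)‾ = g ∧ (n + 1)`
for every `g ≥ 0` and every natural number `n`. -/
theorem stmt5 {G : Type*} [AddCommGroup G] [Lattice G] [Module ℝ G]
    [CovariantClass G G (· + ·) (· ≤ ·)]
    (arch : ∀ g h : G, 0 ≤ g → (∀ n : ℕ, n • g ≤ h) → g = 0)
    (T : Truncation G) (g : G) (hg : 0 ≤ g) (n : ℕ) :
    T.wedge g n + T.trunc (T.ominus g n) = T.wedge g (n + 1) :=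
  stmt5_general T g hg n
end

section
/- Dini's theorem for pointed frames: if L is a compact frame and (g_n) is a sequence of positive elements of R₀L (pointed frame homomorphisms from the pointed frame of reals to L) such that ⋁_n g_n(−∞, ε) = ⊤ for every ε > 0, then for every ε > 0 there exists m such that g_n(−∞, ε) = ⊤ for all n ≥ m. -/
/-!
A monotone family of elements whose supremum reaches a compact element `k` is directed, so
by compactness a single member already lies above `k`. In a compact frame this applies to
`k = ⊤` and the increasing family `gₙ(-∞, ε)`: one of them is `⊤`, hence so are all later ones.
-/

open TopologicalSpace

/-- The Mathlib (Dec 2024) definition of a compact element of a complete lattice. -/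
def CompleteLattice.IsCompactElement {α : Type*} [CompleteLattice α] (k : α) :=
  ∀ s : Set α, k ≤ sSup s → ∃ t : Finset α, ↑t ⊆ s ∧ k ≤ t.sup id

/-- The open lower ray `(-∞, r)` as an open set of `ℝ`. -/
def Oiio (r : ℝ) : Opens ℝ := ⟨Set.Iio r, isOpen_Iio⟩

/-- The open upper ray `(r, ∞)` as an open set of `ℝ`. -/
def Oioi (r : ℝ) : Opens ℝ := ⟨Set.Ioi r, isOpen_Ioi⟩

/-- The open interval `(r, s)` as an open set of `ℝ`. -/
def Oioo (r s : ℝ) : Opens ℝ := ⟨Set.Ioo r s, isOpen_Ioo⟩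

theorem CompleteLattice.IsCompactElement.isCompactElement {α : Type*} [CompleteLattice α]
    {k : α} (hk : CompleteLattice.IsCompactElement k) : _root_.IsCompactElement k :=
  (isCompactElement_iff_exists_le_sSup_of_le_sSup α k).2 hk

theorem IsCompactElement.exists_le_of_monotone_of_le_iSup {α ι : Type*} [CompleteLattice α]
    [Preorder ι] [IsDirectedOrder ι] [Nonempty ι] {k : α} (hk : IsCompactElement k)
    {f : ι → α} (hf : Monotone f) (hle : k ≤ ⨆ i, f i) : ∃ i, k ≤ f i := by
  rw [CompleteLattice.isCompactElement_iff_le_of_directed_sSup_le] at hk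
  obtain ⟨-, ⟨i, rfl⟩, hi⟩ :=
    hk (Set.range f) (Set.range_nonempty f) (directedOn_range.2 hf.directed_le) hle
  exact ⟨i, hi⟩

theorem IsCompactElement.exists_forall_ge_eq_top_of_monotone {α ι : Type*} [CompleteLattice α]
    [Preorder ι] [IsDirectedOrder ι] [Nonempty ι] (htop : IsCompactElement (⊤ : α))
    {f : ι → α} (hf : Monotone f) (hsup : ⨆ i, f i = ⊤) : ∃ m, ∀ n, m ≤ n → f n = ⊤ := by
  obtain ⟨m, hm⟩ := htop.exists_le_of_monotone_of_le_iSup hf hsup.ge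
  exact ⟨m, fun n hmn => top_le_iff.1 (hm.trans (hf hmn))⟩

theorem stmt9_general (L : Type*) [Order.Frame L]
    (hcompact : CompleteLattice.IsCompactElement (⊤ : L))
    (g : ℕ → FrameHom (Opens ℝ) L)
    (hdec : ∀ n (ε : ℝ), g n (Oiio ε) ≤ g (n + 1) (Oiio ε))
    (hconv : ∀ ε : ℝ, 0 < ε → ⨆ n, g n (Oiio ε) = ⊤) :
    ∀ ε : ℝ, 0 < ε → ∃ m : ℕ, ∀ n : ℕ, m ≤ n → g n (Oiio ε) = ⊤ := fun ε hε =>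
  hcompact.isCompactElement.exists_forall_ge_eq_top_of_monotone
    (monotone_nat_of_le_succ fun n => hdec n ε) (hconv ε hε)

/-- Dini's theorem for (pointed) frames: if `L` is a compact frame and `(gₙ)`
is a nonincreasing sequence of positive elements of `R₀L` (pointed frame
homomorphisms `𝒪⋆ℝ → L`) which converges pointwise (downward) to `0`, i.e.
`⋁ₙ gₙ(-∞, ε) = ⊤` for every `ε > 0`, then it converges uniformly to `0`:
for every `ε > 0` there is `m` with `gₙ(-∞, ε) = ⊤` for all `n ≥ m`. -/
theorem stmt9 (L : Type*) [Order.Frame L]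
    (hcompact : CompleteLattice.IsCompactElement (⊤ : L))
    (pt : FrameHom L Prop)
    (g : ℕ → FrameHom (Opens ℝ) L)
    (hpointed : ∀ n (U : Opens ℝ), pt (g n U) ↔ (0 : ℝ) ∈ (U : Set ℝ))
    (hpos : ∀ n, g n (Oiio 0) = ⊥)
    (hdec : ∀ n (ε : ℝ), g n (Oiio ε) ≤ g (n + 1) (Oiio ε))
    (hconv : ∀ ε : ℝ, 0 < ε → ⨆ n, g n (Oiio ε) = ⊤) :
    ∀ ε : ℝ, 0 < ε → ∃ m : ℕ, ∀ n : ℕ, m ≤ n → g n (Oiio ε) = ⊤ :=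
  stmt9_general L hcompact g hdec hconv
end

section
/- Let q: M → L be a dense surjective pointed frame homomorphism and h': 𝒪*(ℝ ∪ {±∞}) → M a pointed frame homomorphism. Then there exists a pointed frame homomorphism h: 𝒪*ℝ → L with h ∘ p = q ∘ h' (where p: 𝒪*(ℝ∪{±∞}) → 𝒪*ℝ is given by U ↦ U ∩ (−∞,∞)) if and only if q(h'(−∞, ∞)) = ⊤. -/
open TopologicalSpace

/-- The pointed frame map `p : 𝒪⋆(ℝ ∪ {±∞}) → 𝒪⋆ℝ` of the inclusion of `ℝ` into
the extended reals, `U ↦ U ∩ (-∞, ∞)`. -/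
noncomputable def pMap : FrameHom (Opens EReal) (Opens ℝ) :=
  Opens.comap ⟨fun x : ℝ => (x : EReal), continuous_coe_real_ereal⟩

/-- The open set `(-∞, ∞)` of finite extended reals. -/
def finiteReals : Opens EReal := ⟨Set.Ioo ⊥ ⊤, isOpen_Ioo⟩

/-!
`ℝ` is an open subspace of the extended reals, and taking images along an open embedding
preserves joins and binary meets. So a frame map `g` out of `𝒪(ℝ ∪ {±∞})` with
`g(-∞, ∞) = ⊤` induces the frame map `U ↦ g(U)` on `𝒪ℝ`, and since `p U = U ∩ (-∞, ∞)` it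
satisfies `h ∘ p = g`; take `g = q ∘ h'`. Conversely `p(-∞, ∞) = ⊤` gives
`q(h'(-∞, ∞)) = h ⊤ = ⊤`.
-/
open Topology

namespace Topology.IsOpenEmbedding

variable {X Y : Type*} [TopologicalSpace X] [TopologicalSpace Y] {f : X → Y}

def opensImage (hf : IsOpenEmbedding f) (U : Opens X) : Opens Y :=
  ⟨f '' U, hf.isOpenMap _ U.isOpen⟩

def opensRange (hf : IsOpenEmbedding f) : Opens Y :=
  ⟨Set.range f, hf.isOpen_range⟩

variable (hf : IsOpenEmbedding f)

@[simp]
theorem coe_opensImage (U : Opens X) : (hf.opensImage U : Set Y) = f '' U := rfl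

theorem opensImage_top : hf.opensImage ⊤ = hf.opensRange :=
  Opens.ext Set.image_univ

theorem opensImage_inf (U V : Opens X) :
    hf.opensImage (U ⊓ V) = hf.opensImage U ⊓ hf.opensImage V :=
  Opens.ext (Set.image_inter hf.injective)

theorem opensImage_sSup (S : Set (Opens X)) :
    hf.opensImage (sSup S) = sSup (hf.opensImage '' S) := by
  apply Opens.ext
  simp only [coe_opensImage, Opens.coe_sSup, Set.image_iUnion, Set.biUnion_image]

theorem opensImage_comap (U : Opens Y) :
    hf.opensImage (Opens.comap ⟨f, hf.continuous⟩ U) = U ⊓ hf.opensRange :=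
  Opens.ext Set.image_preimage_eq_inter_range

theorem mem_opensImage_iff {U : Opens X} {x : X} : f x ∈ hf.opensImage U ↔ x ∈ U :=
  hf.injective.mem_set_image

end Topology.IsOpenEmbedding

namespace FrameHom

variable {X Y M : Type*} [TopologicalSpace X] [TopologicalSpace Y] [Order.Frame M] {f : X → Y}

def restrictOpenEmbedding (g : FrameHom (Opens Y) M) (hf : IsOpenEmbedding f)
    (hg : g hf.opensRange = ⊤) : FrameHom (Opens X) M where
  toFun U := g (hf.opensImage U)
  map_inf' U V := by simp only [hf.opensImage_inf, map_inf]
  map_top' := by simp only [hf.opensImage_top, hg]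
  map_sSup' S := by simp only [hf.opensImage_sSup, sSup_image, map_iSup]

variable (g : FrameHom (Opens Y) M) (hf : IsOpenEmbedding f) (hg : g hf.opensRange = ⊤)

theorem restrictOpenEmbedding_apply (U : Opens X) :
    g.restrictOpenEmbedding hf hg U = g (hf.opensImage U) := rfl

theorem restrictOpenEmbedding_comap (U : Opens Y) :
    g.restrictOpenEmbedding hf hg (Opens.comap ⟨f, hf.continuous⟩ U) = g U := by
  rw [restrictOpenEmbedding_apply, hf.opensImage_comap, map_inf, hg, inf_top_eq]

end FrameHom

theorem opensRange_coe_eq_finiteReals :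
    EReal.isOpenEmbedding_coe.opensRange = finiteReals :=
  Opens.ext EReal.range_coe_eq_Ioo

theorem pMap_finiteReals : pMap finiteReals = ⊤ := by
  rw [← opensRange_coe_eq_finiteReals, eq_top_iff]
  rintro x -
  exact Set.mem_range_self x

theorem stmt10_general (M L : Type*) [Order.Frame M] [Order.Frame L]
    (ptM : FrameHom M Prop) (ptL : FrameHom L Prop)
    (q : FrameHom M L)
    (hq_pointed : ∀ x : M, ptL (q x) ↔ ptM x)
    (h' : FrameHom (Opens EReal) M)
    (hh'_pointed : ∀ U : Opens EReal, ptM (h' U) ↔ (0 : EReal) ∈ (U : Set EReal)) :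
    (∃ h : FrameHom (Opens ℝ) L,
        (∀ U : Opens ℝ, ptL (h U) ↔ (0 : ℝ) ∈ (U : Set ℝ)) ∧
        ∀ U : Opens EReal, h (pMap U) = q (h' U)) ↔
      q (h' finiteReals) = ⊤ := by
  constructor
  · rintro ⟨h, -, hcomm⟩
    rw [← hcomm, pMap_finiteReals, map_top]
  · intro htop
    have hg : (q.comp h') EReal.isOpenEmbedding_coe.opensRange = ⊤ := by
      rwa [opensRange_coe_eq_finiteReals]
    refine ⟨(q.comp h').restrictOpenEmbedding EReal.isOpenEmbedding_coe hg, fun U => ?_,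
      (q.comp h').restrictOpenEmbedding_comap EReal.isOpenEmbedding_coe hg⟩
    rw [FrameHom.restrictOpenEmbedding_apply, FrameHom.comp_apply, hq_pointed, hh'_pointed,
      ← EReal.coe_zero]
    exact EReal.isOpenEmbedding_coe.mem_opensImage_iff

/-- Let `q : M → L` be a dense surjective pointed frame homomorphism and
`h' : 𝒪⋆(ℝ ∪ {±∞}) → M` a pointed frame homomorphism. Then `h'` drops to a
pointed frame homomorphism `h : 𝒪⋆ℝ → L` with `h ∘ p = q ∘ h'` iff
`q(h'(-∞, ∞)) = ⊤`. -/
theorem stmt10 (M L : Type*) [Order.Frame M] [Order.Frame L]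
    (ptM : FrameHom M Prop) (ptL : FrameHom L Prop)
    (q : FrameHom M L)
    (hq_surj : Function.Surjective q)
    (hq_dense : ∀ x : M, q x = ⊥ → x = ⊥)
    (hq_pointed : ∀ x : M, ptL (q x) ↔ ptM x)
    (h' : FrameHom (Opens EReal) M)
    (hh'_pointed : ∀ U : Opens EReal, ptM (h' U) ↔ (0 : EReal) ∈ (U : Set EReal)) :
    (∃ h : FrameHom (Opens ℝ) L,
        (∀ U : Opens ℝ, ptL (h U) ↔ (0 : ℝ) ∈ (U : Set ℝ)) ∧
        ∀ U : Opens EReal, h (pMap U) = q (h' U)) ↔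
      q (h' finiteReals) = ⊤ :=
  stmt10_general M L ptM ptL q hq_pointed h' hh'_pointed
end

section
/- An element u ≥ 0 of R₀L is a unital component (i.e., u = (2u)̄) if and only if u = χ_x for some complemented element x of L with *(x) = ⊥, where χ_x is the characteristic function of x. -/
/-!
With `c t = min (2 t) 1`, the truncation of `2u` is `u ∘ c⁻¹`, so `u` is a unital component
iff `u` is invariant under `c⁻¹`. Invariance gives `u (r, ∞) = u (r/2, ∞)` and
`u (-∞, r) = u (-∞, r/2)`; together with monotonicity this makes `u` constant on the rays
`(s, ∞)` and `(-∞, s)` for `0 < s < 1`, while `u (1, ∞) = u ∅ = ⊥`. Then `x = u (0, ∞)` and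
`y = u (-∞, 1)` are complements (the rays at `1/2` are disjoint), and squeezing a neighbourhood
of `0` or `1` between rays shows `u U = χ_x U`. Conversely `χ_x` is `c⁻¹`-invariant because
`c` fixes `0` and `1`.
-/

open TopologicalSpace

/-- The truncation operation on frame-valued functions on `𝒪ℝ`, induced by the
continuous map `x ↦ x ∧ 1` via `w(f)(V) = ⋁_{w(U) ⊆ V} f(U)`. -/
noncomputable def truncMap {L : Type*} [Order.Frame L] (g : Opens ℝ → L)
    (V : Opens ℝ) : L :=
  ⨆ U : Opens ℝ, ⨆ _ : (fun x : ℝ => min x 1) '' (U : Set ℝ) ⊆ (V : Set ℝ), g U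

/-- The scalar double `2u` of `u ∈ R₀L`, given by `(2u)(U) = u({x | 2x ∈ U})`,
so that `(2u)(r, ∞) = u(r/2, ∞)`. -/
noncomputable def doubleMap {L : Type*} [Order.Frame L] (u : FrameHom (Opens ℝ) L) :
    FrameHom (Opens ℝ) L :=
  u.comp (Opens.comap ⟨fun x : ℝ => 2 * x, by continuity⟩)

open Classical in
/-- The characteristic function `χ_x ∈ R₀L` of a complemented element `x` of `L`
with complement `y`: `χ_x(U) = ⊤` if `0, 1 ∈ U`; `= x` if `1 ∈ U`, `0 ∉ U`;
`= y` if `0 ∈ U`, `1 ∉ U`; `= ⊥` if `0, 1 ∉ U`. -/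
noncomputable def chi {L : Type*} [Order.Frame L] (x y : L) (U : Opens ℝ) : L :=
  if (0 : ℝ) ∈ (U : Set ℝ) then (if (1 : ℝ) ∈ (U : Set ℝ) then ⊤ else y)
  else (if (1 : ℝ) ∈ (U : Set ℝ) then x else ⊥)

open Set

noncomputable def clampDouble : C(ℝ, ℝ) := ⟨fun t => min (2 * t) 1, by fun_prop⟩

lemma truncMap_doubleMap {L : Type*} [Order.Frame L] (u : FrameHom (Opens ℝ) L)
    (V : Opens ℝ) : truncMap (doubleMap u) V = u (Opens.comap clampDouble V) := by
  refine le_antisymm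
    (iSup₂_le fun U hU => OrderHomClass.mono u fun t ht => hU ⟨2 * t, ht, rfl⟩) ?_
  -- `U = {t | min t 1 ∈ V}` attains the supremum.
  exact le_iSup₂_of_le (Opens.comap ⟨fun t => min t 1, by fun_prop⟩ V)
    (by rintro _ ⟨t, ht, rfl⟩; exact ht) le_rfl

lemma chi_comap {L : Type*} [Order.Frame L] (x y : L) {f : C(ℝ, ℝ)} (h0 : f 0 = 0)
    (h1 : f 1 = 1) (U : Opens ℝ) : chi x y (Opens.comap f U) = chi x y U := by
  have hmem : ∀ a : ℝ, f a = a → (a ∈ (Opens.comap f U : Set ℝ) ↔ a ∈ (U : Set ℝ)) :=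
    fun a ha => by rw [Opens.coe_comap, mem_preimage, ha]
  unfold chi
  rw [hmem 0 h0, hmem 1 h1]

lemma comap_clampDouble_Oioi {r : ℝ} (hr : r < 1) :
    Opens.comap clampDouble (Oioi r) = Oioi (r / 2) := by
  ext t
  simp only [clampDouble, Oioi, Opens.coe_comap, ContinuousMap.coe_mk, Opens.coe_mk,
    mem_preimage, mem_Ioi, lt_min_iff]
  constructor
  · rintro ⟨h, -⟩; linarith
  · intro h; exact ⟨by linarith, hr⟩

lemma comap_clampDouble_Oioi_one : Opens.comap clampDouble (Oioi 1) = ⊥ := by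
  ext t
  simp [clampDouble, Oioi]

lemma comap_clampDouble_Oiio {r : ℝ} (hr : r ≤ 1) :
    Opens.comap clampDouble (Oiio r) = Oiio (r / 2) := by
  ext t
  simp only [clampDouble, Oiio, Opens.coe_comap, ContinuousMap.coe_mk, Opens.coe_mk,
    mem_preimage, mem_Iio, min_lt_iff]
  constructor
  · rintro (h | h) <;> linarith
  · intro h; left; linarith

lemma apply_div_two_pow_eq {α : Type*} {f : ℝ → α}
    (hf : ∀ s ∈ Ioo (0 : ℝ) 1, f (s / 2) = f s) {s : ℝ} (hs : s ∈ Ioo 0 1) (n : ℕ) :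
    f (s / 2 ^ n) = f s := by
  induction n with
  | zero => simp
  | succ n ih =>
    have hpos : 0 < s / 2 ^ n := div_pos hs.1 (by positivity)
    have hlt : s / 2 ^ n < 1 :=
      (div_le_self hs.1.le (one_le_pow₀ one_le_two)).trans_lt hs.2
    rw [pow_succ, ← div_div, hf _ ⟨hpos, hlt⟩, ih]

lemma Monotone.eq_of_apply_div_two_eq {α : Type*} [PartialOrder α] {f : ℝ → α}
    (hmono : Monotone f) (hf : ∀ s ∈ Ioo (0 : ℝ) 1, f (s / 2) = f s) {s t : ℝ}
    (hs : s ∈ Ioo 0 1) (ht : t ∈ Ioo 0 1) : f s = f t := by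
  have key : ∀ {s t : ℝ}, s ∈ Ioo 0 1 → t ∈ Ioo 0 1 → f s ≤ f t := by
    intro s t hs ht
    obtain ⟨n, hn⟩ := exists_pow_lt_of_lt_one ht.1 (by norm_num : (1 / 2 : ℝ) < 1)
    have hle : s / 2 ^ n ≤ t := by
      rw [div_eq_mul_one_div, ← one_div_pow]
      nlinarith [hs.2, pow_pos (by norm_num : (0 : ℝ) < 1 / 2) n]
    rw [← apply_div_two_pow_eq hf hs n]
    exact hmono hle
  exact le_antisymm (key hs ht) (key ht hs)

lemma Antitone.eq_of_apply_div_two_eq {α : Type*} [PartialOrder α] {f : ℝ → α}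
    (hanti : Antitone f) (hf : ∀ s ∈ Ioo (0 : ℝ) 1, f (s / 2) = f s) {s t : ℝ}
    (hs : s ∈ Ioo 0 1) (ht : t ∈ Ioo 0 1) : f s = f t :=
  hanti.dual_right.eq_of_apply_div_two_eq (f := OrderDual.toDual ∘ f) hf hs ht

lemma Oioi_zero_eq_iSup : Oioi 0 = ⨆ s : Ioo (0 : ℝ) 1, Oioi s := by
  ext t
  simp only [Oioi, Opens.coe_mk, Opens.coe_iSup, mem_Ioi, mem_iUnion, Subtype.exists,
    mem_Ioo, exists_prop]
  constructor
  · intro ht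
    exact ⟨min (t / 2) (1 / 2), ⟨by positivity, by norm_num⟩,
      (min_le_left _ _).trans_lt (by linarith)⟩
  · rintro ⟨s, ⟨hs, -⟩, hst⟩
    exact hs.trans hst

lemma Oioi_zero_sup_Oiio_one : Oioi 0 ⊔ Oiio (1 : ℝ) = ⊤ := by
  ext t
  simp only [Oioi, Oiio, Opens.coe_sup, Opens.coe_mk, Opens.coe_top, mem_union, mem_Ioi,
    mem_Iio, mem_univ, iff_true]
  by_contra! ht
  linarith [ht.1, ht.2]

section FrameHom

variable {L : Type*} [Order.Frame L] (u : FrameHom (Opens ℝ) L)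

lemma apply_Oioi_zero_sup_apply_Oiio_one : u (Oioi 0) ⊔ u (Oiio 1) = ⊤ := by
  rw [← map_sup, Oioi_zero_sup_Oiio_one, map_top]

lemma apply_le_sup_of_notMem {U : Opens ℝ} {p : ℝ} (hU : p ∉ (U : Set ℝ)) :
    u U ≤ u (Oiio p) ⊔ u (Oioi p) := by
  rw [← map_sup]
  exact OrderHomClass.mono u fun t ht => lt_or_gt_of_ne (ne_of_mem_of_not_mem ht hU)

end FrameHom

def IsUnitalComponent {L : Type*} [Order.Frame L] (u : FrameHom (Opens ℝ) L) : Prop :=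
  ∀ V : Opens ℝ, u V = truncMap (doubleMap u) V

namespace IsUnitalComponent

variable {L : Type*} [Order.Frame L] {u : FrameHom (Opens ℝ) L}

lemma apply_comap (h : IsUnitalComponent u) (V : Opens ℝ) :
    u (Opens.comap clampDouble V) = u V :=
  ((h V).trans (truncMap_doubleMap u V)).symm

lemma apply_Oioi_one (h : IsUnitalComponent u) : u (Oioi 1) = ⊥ := by
  rw [← h.apply_comap, comap_clampDouble_Oioi_one, map_bot]

lemma apply_Oioi (h : IsUnitalComponent u) {s : ℝ} (hs : s ∈ Ioo 0 1) :
    u (Oioi s) = u (Oioi 0) := by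
  have hanti : Antitone fun r => u (Oioi r) :=
    fun a b hab => OrderHomClass.mono u fun t (ht : b < t) => show a < t from hab.trans_lt ht
  have hconst : ∀ t ∈ Ioo (0 : ℝ) 1, u (Oioi t) = u (Oioi s) :=
    fun t ht => hanti.eq_of_apply_div_two_eq
      (fun r hr => by rw [← h.apply_comap (Oioi r), comap_clampDouble_Oioi hr.2]) ht hs
  have : Nonempty (Ioo (0 : ℝ) 1) := ⟨⟨s, hs⟩⟩
  rw [Oioi_zero_eq_iSup, map_iSup]
  simp only [fun t : Ioo (0 : ℝ) 1 => hconst t t.2]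
  exact ciSup_const.symm

lemma apply_Oiio (h : IsUnitalComponent u) {s : ℝ} (hs : s ∈ Ioo 0 1) :
    u (Oiio s) = u (Oiio 1) := by
  have hmono : Monotone fun r => u (Oiio r) :=
    fun a b hab => OrderHomClass.mono u fun t (ht : t < a) => show t < b from ht.trans_le hab
  have hhalf : ∀ r ≤ 1, u (Oiio (r / 2)) = u (Oiio r) :=
    fun r hr => by rw [← h.apply_comap (Oiio r), comap_clampDouble_Oiio hr]
  rw [← hhalf 1 le_rfl]
  exact hmono.eq_of_apply_div_two_eq (fun r hr => hhalf r hr.2.le) hs (by norm_num)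

lemma inf_eq_bot (h : IsUnitalComponent u) : u (Oioi 0) ⊓ u (Oiio 1) = ⊥ := by
  have hhalf : (1 / 2 : ℝ) ∈ Ioo 0 1 := by norm_num
  have hdisj : Oioi (1 / 2) ⊓ Oiio (1 / 2 : ℝ) = ⊥ := by
    ext t
    simp only [Oioi, Oiio, Opens.coe_inf, Opens.coe_mk, Opens.coe_bot, mem_inter_iff,
      mem_Ioi, mem_Iio, mem_empty_iff_false, iff_false, not_and, not_lt]
    exact le_of_lt
  rw [← h.apply_Oioi hhalf, ← h.apply_Oiio hhalf, ← map_inf, hdisj, map_bot]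

lemma apply_Oiio_one_le (h : IsUnitalComponent u) (hpos : u (Oiio 0) = ⊥) {U : Opens ℝ}
    (hU : (0 : ℝ) ∈ (U : Set ℝ)) : u (Oiio 1) ≤ u U := by
  obtain ⟨l, r, ⟨hl, hr⟩, hsub⟩ :=
    mem_nhds_iff_exists_Ioo_subset.1 (U.isOpen.mem_nhds hU)
  set s := min r (1 / 2)
  have hs : s ∈ Ioo (0 : ℝ) 1 :=
    ⟨lt_min hr (by norm_num), (min_le_right _ _).trans_lt (by norm_num)⟩
  have hcover : Oiio s ≤ U ⊔ Oiio 0 := by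
    intro t (ht : t < s)
    by_cases ht0 : t < 0
    · exact Or.inr ht0
    · exact Or.inl (hsub ⟨by linarith, ht.trans_le (min_le_left _ _)⟩)
  calc u (Oiio 1) = u (Oiio s) := (h.apply_Oiio hs).symm
    _ ≤ u U := by simpa [hpos] using OrderHomClass.mono u hcover

lemma apply_Oioi_zero_le (h : IsUnitalComponent u) {U : Opens ℝ}
    (hU : (1 : ℝ) ∈ (U : Set ℝ)) : u (Oioi 0) ≤ u U := by
  obtain ⟨l, r, ⟨hl, hr⟩, hsub⟩ :=
    mem_nhds_iff_exists_Ioo_subset.1 (U.isOpen.mem_nhds hU)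
  set s := max l (1 / 2)
  have hs : s ∈ Ioo (0 : ℝ) 1 :=
    ⟨(by norm_num : (0 : ℝ) < 1 / 2).trans_le (le_max_right _ _), max_lt hl (by norm_num)⟩
  have hcover : Oioi s ≤ U ⊔ Oioi 1 := by
    intro t (ht : s < t)
    by_cases ht1 : 1 < t
    · exact Or.inr ht1
    · exact Or.inl (hsub ⟨(le_max_left _ _).trans_lt ht, by linarith⟩)
  calc u (Oioi 0) = u (Oioi s) := (h.apply_Oioi hs).symm
    _ ≤ u U := by simpa [h.apply_Oioi_one] using OrderHomClass.mono u hcover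

lemma eq_chi (h : IsUnitalComponent u) (hpos : u (Oiio 0) = ⊥) (U : Opens ℝ) :
    u U = chi (u (Oioi 0)) (u (Oiio 1)) U := by
  have hle_x : (0 : ℝ) ∉ (U : Set ℝ) → u U ≤ u (Oioi 0) :=
    fun hU => by simpa [hpos] using apply_le_sup_of_notMem u hU
  have hle_y : (1 : ℝ) ∉ (U : Set ℝ) → u U ≤ u (Oiio 1) :=
    fun hU => by simpa [h.apply_Oioi_one] using apply_le_sup_of_notMem u hU
  unfold chi
  split_ifs with h0 h1 h1
  · exact top_unique (apply_Oioi_zero_sup_apply_Oiio_one u ▸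
      sup_le (h.apply_Oioi_zero_le h1) (h.apply_Oiio_one_le hpos h0))
  · exact le_antisymm (hle_y h1) (h.apply_Oiio_one_le hpos h0)
  · exact le_antisymm (hle_x h0) (h.apply_Oioi_zero_le h1)
  · exact le_bot_iff.1 (h.inf_eq_bot ▸ le_inf (hle_x h0) (hle_y h1))

end IsUnitalComponent

/-- An element `u ≥ 0` of `R₀L` is a unital component (i.e. `u = (2u)‾`) iff
`u = χ_x` for some complemented element `x` of `L` with `*(x) = ⊥`. -/
theorem stmt12 (L : Type*) [Order.Frame L]
    (pt : FrameHom L Prop)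
    (u : FrameHom (Opens ℝ) L)
    (hpointed : ∀ U : Opens ℝ, pt (u U) ↔ (0 : ℝ) ∈ (U : Set ℝ))
    (hpos : u (Oiio 0) = ⊥) :
    (∀ U : Opens ℝ, u U = truncMap (doubleMap u) U) ↔
      ∃ x y : L, x ⊔ y = ⊤ ∧ x ⊓ y = ⊥ ∧ ¬ pt x ∧ ∀ U : Opens ℝ, u U = chi x y U := by
  constructor
  · rintro (h : IsUnitalComponent u)
    refine ⟨u (Oioi 0), u (Oiio 1), apply_Oioi_zero_sup_apply_Oiio_one u, h.inf_eq_bot, ?_,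
      h.eq_chi hpos⟩
    rw [hpointed]
    exact lt_irrefl (0 : ℝ)
  · rintro ⟨x, y, -, -, -, hu⟩ U
    have h0 : clampDouble 0 = 0 := by norm_num [clampDouble]
    have h1 : clampDouble 1 = 1 := by norm_num [clampDouble]
    rw [truncMap_doubleMap, hu, hu, chi_comap x y h0 h1]
end

section
/- For a positive element g of R₀L, the following are equivalent: (i) there exists ε > 0 with g(0, ∞) = g(ε, ∞); (ii) there exists ε > 0 with g(0, ε) = ⊥. -/
open TopologicalSpace

theorem Oioo_le_Oioi (a b : ℝ) : Oioo a b ≤ Oioi a := fun _ hx => hx.1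

theorem Oioo_inf_Oioi_self (a b : ℝ) : Oioo a b ⊓ Oioi b = ⊥ :=
  Opens.ext <| Set.eq_empty_of_forall_notMem fun _ ⟨hab, hb⟩ => (lt_asymm hab.2 hb).elim

theorem Oioi_eq_Oioo_sup_Oioi {a b c : ℝ} (hac : a ≤ c) (hcb : c < b) :
    Oioi a = Oioo a b ⊔ Oioi c := by
  refine Opens.ext <| Set.ext fun x => ?_
  change a < x ↔ (a < x ∧ x < b) ∨ c < x
  constructor
  · intro hx
    rcases lt_or_ge x b with hxb | hbx
    · exact Or.inl ⟨hx, hxb⟩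
    · exact Or.inr (hcb.trans_le hbx)
  · rintro (⟨hx, -⟩ | hx)
    exacts [hx, hac.trans_lt hx]

section

variable {L : Type*} [Order.Frame L] (g : FrameHom (Opens ℝ) L)

theorem map_Oioo_eq_bot_of_map_Oioi_eq {a b : ℝ} (h : g (Oioi a) = g (Oioi b)) :
    g (Oioo a b) = ⊥ := by
  have hle : g (Oioo a b) ≤ g (Oioi b) := h ▸ OrderHomClass.mono g (Oioo_le_Oioi a b)
  rw [← inf_eq_left.2 hle, ← map_inf, Oioo_inf_Oioi_self, map_bot]

theorem map_Oioi_eq_of_map_Oioo_eq_bot {a b c : ℝ} (hac : a ≤ c) (hcb : c < b)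
    (h : g (Oioo a b) = ⊥) : g (Oioi a) = g (Oioi c) := by
  rw [Oioi_eq_Oioo_sup_Oioi hac hcb, map_sup, h, bot_sup_eq]

end

theorem stmt13_general (L : Type*) [Order.Frame L]
    (g : FrameHom (Opens ℝ) L) :
    (∃ ε : ℝ, 0 < ε ∧ g (Oioi 0) = g (Oioi ε)) ↔
      (∃ ε : ℝ, 0 < ε ∧ g (Oioo 0 ε) = ⊥) := by
  constructor
  · rintro ⟨ε, hε, h⟩
    exact ⟨ε, hε, map_Oioo_eq_bot_of_map_Oioi_eq g h⟩
  · rintro ⟨ε, hε, h⟩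
    exact ⟨ε / 2, half_pos hε,
      map_Oioi_eq_of_map_Oioo_eq_bot g (half_pos hε).le (half_lt_self hε) h⟩

/-- For a positive element `g` of `R₀L`, the following are equivalent:
(i) there exists `ε > 0` with `g(0, ∞) = g(ε, ∞)`;
(ii) there exists `ε > 0` with `g(0, ε) = ⊥`. -/
theorem stmt13 (L : Type*) [Order.Frame L]
    (g : FrameHom (Opens ℝ) L)
    (hpos : g (Oiio 0) = ⊥) :
    (∃ ε : ℝ, 0 < ε ∧ g (Oioi 0) = g (Oioi ε)) ↔
      (∃ ε : ℝ, 0 < ε ∧ g (Oioo 0 ε) = ⊥) :=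
  stmt13_general L g
end

section
/- For a positive element g of R₀L, if there exists ε > 0 with g(ε, ∞) = g(0, ∞) =: x, and n is a positive integer with 1/n < ε, then (n·g ∧ 1-truncation) equals the characteristic function of x: (ng)̄(s, ∞) = ⊥ for s ≥ 1, = x for 0 ≤ s < 1, and = ⊤ for s < 0; in particular (ng)̄ is a unital component and x is complemented in L. -/
open TopologicalSpace

/-- The scalar multiple `c • g` of `g ∈ R₀L` for `c > 0`, given by
`(c • g)(U) = g({x | c * x ∈ U})`, so that `(c • g)(r, ∞) = g(r/c, ∞)`. -/
noncomputable def scaleMap {L : Type*} [Order.Frame L] (c : ℝ)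
    (g : FrameHom (Opens ℝ) L) : FrameHom (Opens ℝ) L :=
  g.comp (Opens.comap ⟨fun x : ℝ => c * x, by continuity⟩)

/-! Positivity and the plateau `g(ε, ∞) = g(0, ∞)` say that `g` kills `N = (-∞, 0) ∪ (0, ε)`,
so `g A = g B` whenever `A ∪ N = B ∪ N`. The truncation of `n • g` is `g ∘ w⁻¹` for
`w x = min (n x) 1`, and off `N` the map `w` sends `0` to `0` and `[ε, ∞)` to `1` (as `n ε > 1`).
Hence off `N` the open `w⁻¹ U` agrees with `χ` formed from the opens `(0, ∞)` and `(-∞, ε)`, whose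
`g`-images are complementary: they cover `ℝ` and meet in `(0, ε) ⊆ N`. -/

lemma map_chi {α β F : Type*} [Order.Frame α] [Order.Frame β] [FunLike F α β]
    [BoundedOrderHomClass F α β] (f : F) (a b : α) (U : Opens ℝ) :
    f (chi a b U) = chi (f a) (f b) U := by
  unfold chi
  split_ifs <;> simp

lemma map_eq_map_of_sup_eq_sup {α β F : Type*} [SemilatticeSup α] [SemilatticeSup β] [OrderBot β]
    [FunLike F α β] [SupHomClass F α β] {f : F} {a b n : α} (hn : f n = ⊥)
    (h : a ⊔ n = b ⊔ n) : f a = f b := by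
  rw [← sup_bot_eq (f a), ← sup_bot_eq (f b), ← hn, ← map_sup, ← map_sup, h]

def truncScale (c : ℝ) : C(ℝ, ℝ) := ⟨fun x => min (c * x) 1, by fun_prop⟩

lemma truncMap_scaleMap {L : Type*} [Order.Frame L] (c : ℝ) (g : FrameHom (Opens ℝ) L)
    (U : Opens ℝ) : truncMap (scaleMap c g) U = g (Opens.comap (truncScale c) U) := by
  refine le_antisymm (iSup₂_le fun V hV => OrderHomClass.mono g ?_) ?_
  · exact fun x hx => hV ⟨c * x, hx, rfl⟩
  · exact le_iSup₂_of_le (Opens.comap ⟨fun x => min x 1, by fun_prop⟩ U)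
      (Set.image_preimage_subset _ _) le_rfl

lemma comap_truncScale_sup_eq {c ε : ℝ} (hε : 0 < ε) (hcε : 1 < c * ε) (U : Opens ℝ) :
    Opens.comap (truncScale c) U ⊔ (Oiio 0 ⊔ Oioo 0 ε) =
      chi (Oioi 0) (Oiio ε) U ⊔ (Oiio 0 ⊔ Oioo 0 ε) := by
  have hc : 0 < c := pos_of_mul_pos_left (one_pos.trans hcε) hε.le
  refine SetLike.ext fun z => ?_
  rw [Opens.mem_sup, Opens.mem_sup, Opens.mem_comap]
  refine or_congr_left' fun hzN => ?_
  have hz : z = 0 ∨ ε ≤ z := by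
    simp only [Oiio, Oioo, Opens.mem_mk, Set.mem_Iio, Set.mem_Ioo, not_or, not_and, not_lt] at hzN
    rcases eq_or_ne z 0 with h | h
    exacts [.inl h, .inr (hzN.2 (hzN.1.lt_of_ne' h))]
  rcases hz with rfl | hz
  · have hw : truncScale c 0 = 0 := by simp [truncScale]
    rw [hw]
    by_cases h0 : (0 : ℝ) ∈ U <;> by_cases h1 : (1 : ℝ) ∈ U <;>
      simp [chi, h0, h1, Oioi, Oiio, hε]
  · have hw : truncScale c z = 1 := min_eq_right (by nlinarith)
    rw [hw]
    by_cases h0 : (0 : ℝ) ∈ U <;> by_cases h1 : (1 : ℝ) ∈ U <;>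
      simp [chi, h0, h1, Oioi, Oiio, not_lt.2 hz, hε.trans_le hz]

section Plateau

variable {L : Type*} [Order.Frame L] {g : FrameHom (Opens ℝ) L} {ε : ℝ}

lemma map_Oioo_zero_eq_bot (hgε : g (Oioi ε) = g (Oioi 0)) : g (Oioo 0 ε) = ⊥ :=
  have hdisj : Disjoint (Oioo 0 ε) (Oioi ε) :=
    Opens.coe_disjoint.1 (Set.Ioi_disjoint_Iio_same.symm.mono_left Set.Ioo_subset_Iio_self)
  (hdisj.map g).eq_bot_of_le (hgε ▸ OrderHomClass.mono g fun _ hz => hz.1)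

lemma isCompl_map_Oioi_zero_map_Oiio (hε : 0 < ε) (hgε : g (Oioi ε) = g (Oioi 0)) :
    IsCompl (g (Oioi 0)) (g (Oiio ε)) := by
  refine .of_eq ?_ ?_
  · rw [← map_inf, ← map_Oioo_zero_eq_bot hgε]
    rfl
  · rw [← map_sup, ← map_top g]
    congr 1
    exact Opens.ext (Set.Ioi_union_Iio_of_lt hε)

end Plateau

/-- For a positive `g ∈ R₀L`: if there is `ε > 0` with `g(ε, ∞) = g(0, ∞) =: x`
and `n` is a positive integer with `1/n < ε`, then the truncation `(ng)‾`
is the characteristic function of `x`: `(ng)‾(s, ∞) = ⊥` for `s ≥ 1`, `= x`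
for `0 ≤ s < 1`, `= ⊤` for `s < 0`; in particular `x` is complemented in `L`
and `(ng)‾ = χ_x` is a unital component. -/
theorem stmt14 (L : Type*) [Order.Frame L]
    (g : FrameHom (Opens ℝ) L)
    (hpos : g (Oiio 0) = ⊥)
    (ε : ℝ) (hε : 0 < ε) (hgε : g (Oioi ε) = g (Oioi 0))
    (n : ℕ) (hn : 0 < n) (hnε : 1 / (n : ℝ) < ε) :
    (∀ s : ℝ,
      (1 ≤ s → truncMap (scaleMap (n : ℝ) g) (Oioi s) = ⊥) ∧
      (0 ≤ s → s < 1 → truncMap (scaleMap (n : ℝ) g) (Oioi s) = g (Oioi 0)) ∧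
      (s < 0 → truncMap (scaleMap (n : ℝ) g) (Oioi s) = ⊤)) ∧
    ∃ y : L, g (Oioi 0) ⊔ y = ⊤ ∧ g (Oioi 0) ⊓ y = ⊥ ∧
      ∀ U : Opens ℝ, truncMap (scaleMap (n : ℝ) g) U = chi (g (Oioi 0)) y U := by
  have hnε' : 1 < (n : ℝ) * ε := by
    rwa [div_lt_iff₀ (by exact_mod_cast hn), mul_comm] at hnε
  have hnull : g (Oiio 0 ⊔ Oioo 0 ε) = ⊥ := by
    rw [map_sup, hpos, map_Oioo_zero_eq_bot hgε, sup_bot_eq]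
  have hχ (U : Opens ℝ) : truncMap (scaleMap n g) U = chi (g (Oioi 0)) (g (Oiio ε)) U := by
    rw [truncMap_scaleMap, ← map_chi]
    exact map_eq_map_of_sup_eq_sup hnull (comap_truncScale_sup_eq hε hnε' U)
  have hcompl := isCompl_map_Oioi_zero_map_Oiio hε hgε
  refine ⟨fun s => ⟨fun hs => ?_, fun hs0 hs1 => ?_, fun hs => ?_⟩,
    _, hcompl.sup_eq_top, hcompl.inf_eq_bot, hχ⟩ <;>
  · rw [hχ]
    simp only [chi, Oioi, Opens.coe_mk, Set.mem_Ioi]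
    split_ifs <;> first | rfl | linarith
end

section
/- If u ≥ 0 in R₀L satisfies u = (2u)̄, then u(r, ∞) = u(0, ∞) for all 0 ≤ r < 1, and x := u(0, ∞) is complemented in L with complement u(−∞, 1). -/
open TopologicalSpace

/-!
Unfolding the truncation, `u = (2u)‾` says `u V = u (f⁻¹ V)` for the continuous map
`f x = min (2x) 1`. For `r < 1` this gives `u(r, ∞) = u(r/2, ∞)`, hence
`u(r, ∞) = u(r/2ⁿ, ∞)` for all `n`, and for `0 < r` these rays exhaust `(0, ∞)`, so
`u(r, ∞) = u(0, ∞) =: x`. For the complement, `x ⊔ u(-∞, 1) = u(ℝ) = ⊤`, while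
`x ⊓ u(-∞, 1) = x ⊓ u(0, 1) = x ⊓ u(0, 1/2) = u(1/2, ∞) ⊓ u(0, 1/2) = u ∅ = ⊥`.
-/

noncomputable def doubleTrunc : C(ℝ, ℝ) := ⟨fun x => min (2 * x) 1, by fun_prop⟩

lemma truncMap_doubleMap_eq {L : Type*} [Order.Frame L] (u : FrameHom (Opens ℝ) L)
    (V : Opens ℝ) : truncMap (doubleMap u) V = u (Opens.comap doubleTrunc V) := by
  apply le_antisymm
  · refine iSup₂_le fun U hU => OrderHomClass.mono u fun x hx => ?_
    exact hU ⟨2 * x, hx, rfl⟩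
  · refine le_iSup₂_of_le (Opens.comap ⟨fun x : ℝ => min x 1, by fun_prop⟩ V) ?_ le_rfl
    rintro _ ⟨x, hx, rfl⟩
    exact hx

lemma comap_doubleTrunc_Oioi {r : ℝ} (hr : r < 1) :
    Opens.comap doubleTrunc (Oioi r) = Oioi (r / 2) := by
  ext x
  change r < min (2 * x) 1 ↔ r / 2 < x
  rw [lt_min_iff]
  constructor
  · rintro ⟨h, -⟩; linarith
  · intro h; exact ⟨by linarith, hr⟩

lemma comap_doubleTrunc_Oioo_zero_one :
    Opens.comap doubleTrunc (Oioo 0 1) = Oioo 0 (1 / 2) := by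
  ext x
  change 0 < min (2 * x) 1 ∧ min (2 * x) 1 < 1 ↔ 0 < x ∧ x < 1 / 2
  rw [lt_min_iff, min_lt_iff]
  constructor
  · rintro ⟨⟨h, -⟩, h' | h'⟩ <;> constructor <;> linarith
  · rintro ⟨h, h'⟩; exact ⟨⟨by linarith, one_pos⟩, Or.inl (by linarith)⟩

lemma Oioi_zero_eq_iSup_s15 {r : ℝ} (hr : 0 < r) : Oioi 0 = ⨆ n : ℕ, Oioi (r / 2 ^ n) := by
  ext x
  simp only [Opens.coe_iSup, Set.mem_iUnion]
  change 0 < x ↔ ∃ n : ℕ, r / 2 ^ n < x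
  constructor
  · intro hx
    obtain ⟨n, hn⟩ := pow_unbounded_of_one_lt (r / x) (one_lt_two (α := ℝ))
    exact ⟨n, (div_lt_iff₀ (by positivity)).2 (by rwa [div_lt_iff₀ hx, mul_comm] at hn)⟩
  · rintro ⟨n, hn⟩
    exact lt_trans (by positivity) hn

lemma Oioi_sup_Oiio {a b : ℝ} (h : a < b) : Oioi a ⊔ Oiio b = ⊤ := by
  ext x
  change a < x ∨ x < b ↔ True
  simp only [iff_true]
  by_contra! hx
  linarith [hx.1, hx.2]

lemma Oioi_inf_Oiio (a b : ℝ) : Oioi a ⊓ Oiio b = Oioo a b := rfl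

lemma Oioi_inf_Oioo_eq_bot {a b c : ℝ} (h : b ≤ a) : Oioi a ⊓ Oioo c b = ⊥ := by
  ext x
  change a < x ∧ c < x ∧ x < b ↔ False
  simp only [iff_false, not_and]
  intro h₁ _ h₂
  linarith

section HalvingRays

variable {L : Type*} [Order.Frame L] {u : FrameHom (Opens ℝ) L}

lemma apply_Oioi_eq_div_two_pow (hhalf : ∀ r < 1, u (Oioi r) = u (Oioi (r / 2)))
    {r : ℝ} (hr : r < 1) (n : ℕ) : u (Oioi r) = u (Oioi (r / 2 ^ n)) := by
  induction n with
  | zero => simp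
  | succ n ih =>
    have hlt : r / 2 ^ n < 1 := by
      rcases le_or_gt r 0 with h | h
      · linarith [div_nonpos_of_nonpos_of_nonneg h (by positivity : (0 : ℝ) ≤ 2 ^ n)]
      · linarith [div_le_self h.le (one_le_pow₀ one_le_two : (1 : ℝ) ≤ 2 ^ n)]
    rw [ih, hhalf _ hlt, div_div, ← pow_succ]

lemma apply_Oioi_eq_apply_Oioi_zero (hhalf : ∀ r < 1, u (Oioi r) = u (Oioi (r / 2)))
    {r : ℝ} (hr₀ : 0 ≤ r) (hr₁ : r < 1) : u (Oioi r) = u (Oioi 0) := by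
  obtain rfl | hr₀ := hr₀.eq_or_lt
  · rfl
  rw [Oioi_zero_eq_iSup_s15 hr₀, map_iSup]
  refine le_antisymm (le_iSup_of_le 0 (by simp)) (iSup_le fun n => ?_)
  exact (apply_Oioi_eq_div_two_pow hhalf hr₁ n).ge

end HalvingRays

theorem stmt15_general (L : Type*) [Order.Frame L]
    (u : FrameHom (Opens ℝ) L)
    (hcomp : ∀ U : Opens ℝ, u U = truncMap (doubleMap u) U) :
    (∀ r : ℝ, 0 ≤ r → r < 1 → u (Oioi r) = u (Oioi 0)) ∧
    u (Oioi 0) ⊔ u (Oiio 1) = ⊤ ∧ u (Oioi 0) ⊓ u (Oiio 1) = ⊥ := by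
  have hinv : ∀ V, u V = u (Opens.comap doubleTrunc V) := fun V => by
    rw [hcomp, truncMap_doubleMap_eq]
  have hhalf : ∀ r < 1, u (Oioi r) = u (Oioi (r / 2)) := fun r hr => by
    rw [hinv (Oioi r), comap_doubleTrunc_Oioi hr]
  have hray : ∀ r : ℝ, 0 ≤ r → r < 1 → u (Oioi r) = u (Oioi 0) :=
    fun r => apply_Oioi_eq_apply_Oioi_zero hhalf
  refine ⟨hray, by rw [← map_sup, Oioi_sup_Oiio one_pos, map_top], ?_⟩
  calc u (Oioi 0) ⊓ u (Oiio 1) = u (Oioi 0) ⊓ u (Oioo 0 1) := by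
        rw [← Oioi_inf_Oiio, map_inf, ← inf_assoc, inf_idem]
    _ = u (Oioi (1 / 2)) ⊓ u (Oioo 0 (1 / 2)) := by
        rw [hinv (Oioo 0 1), comap_doubleTrunc_Oioo_zero_one,
          hray (1 / 2) (by norm_num) (by norm_num)]
    _ = ⊥ := by rw [← map_inf, Oioi_inf_Oioo_eq_bot le_rfl, map_bot]

/-- If `u ≥ 0` in `R₀L` satisfies `u = (2u)‾`, then `u(r, ∞) = u(0, ∞)` for all
`0 ≤ r < 1`, and `x := u(0, ∞)` is complemented in `L` with complement
`u(-∞, 1)`. -/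
theorem stmt15 (L : Type*) [Order.Frame L]
    (u : FrameHom (Opens ℝ) L)
    (hpos : u (Oiio 0) = ⊥)
    (hcomp : ∀ U : Opens ℝ, u U = truncMap (doubleMap u) U) :
    (∀ r : ℝ, 0 ≤ r → r < 1 → u (Oioi r) = u (Oioi 0)) ∧
    u (Oioi 0) ⊔ u (Oiio 1) = ⊤ ∧ u (Oioi 0) ⊓ u (Oiio 1) = ⊥ :=
  stmt15_general L u hcomp
end

section
/- For a sequence (g_n) of positive elements of R₀L, the conditions (1) g_n = (g_{n+1}) ∧ n for all n (where g ∧ n := n·(g/n)̄), and (2) ⋁_n g_n(−∞, n) = ⊤ in L, hold if and only if (g_n) is the truncation sequence of some g ∈ R₀L, i.e., g_n = g ∧ n for all n; moreover such g is unique. -/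
open TopologicalSpace

/-- The truncation `g ∧ c` (i.e., `c·(g/c)‾`) on frame-valued functions on `𝒪ℝ`,
induced by the continuous map `x ↦ x ∧ c` via `w(f)(V) = ⋁_{w(U) ⊆ V} f(U)`. -/
noncomputable def wedgeMap {L : Type*} [Order.Frame L] (g : Opens ℝ → L) (c : ℝ)
    (V : Opens ℝ) : L :=
  ⨆ U : Opens ℝ, ⨆ _ : (fun x : ℝ => min x c) '' (U : Set ℝ) ⊆ (V : Set ℝ), g U

/-!
For a frame homomorphism `f`, the truncation `f ∧ c` is `f` composed with the preimage map of
`x ↦ min x c`, so condition (1) says that `gₙ` and `gₖ` agree on opens below the smaller bound.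
The limit is glued as `g₀(U) = ⋁ₙ gₙ(U ∩ (-∞, n))`: this join is directed, so `g₀` preserves
finite meets, and condition (2) is what makes `g₀ ∧ n` recover all of `gₙ`, not just its part
below `n`. Uniqueness holds because `U = ⋃ₙ U ∩ (-∞, n)`.
-/

noncomputable def minConst (c : ℝ) : C(ℝ, ℝ) := ⟨fun x => min x c, by fun_prop⟩

lemma minConst_comp_minConst {b c : ℝ} (hbc : b ≤ c) :
    (minConst b).comp (minConst c) = minConst b := by
  ext x
  exact (min_assoc x c b).trans (congrArg _ (min_eq_right hbc))

lemma comap_minConst_of_subset_Iio {c : ℝ} {V : Opens ℝ} (hV : (V : Set ℝ) ⊆ Set.Iio c) :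
    Opens.comap (minConst c) V = V := by
  ext x
  change min x c ∈ V ↔ x ∈ V
  refine ⟨fun hx => ?_, fun hx => by rwa [min_eq_left (hV hx).le]⟩
  have hxc : x < c := (min_lt_iff.mp (hV hx)).resolve_right (lt_irrefl c)
  rwa [min_eq_left hxc.le] at hx

lemma comap_minConst_Oiio {r c : ℝ} (hrc : r ≤ c) : Opens.comap (minConst c) (Oiio r) = Oiio r :=
  comap_minConst_of_subset_Iio (Set.Iio_subset_Iio hrc)

lemma iSup_inf_Oiio {c : ℕ → ℝ} (hcu : ∀ x, ∃ n, x < c n) (U : Opens ℝ) :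
    ⨆ n, U ⊓ Oiio (c n) = U := by
  refine le_antisymm (iSup_le fun n => inf_le_left) fun x hx => ?_
  obtain ⟨n, hn⟩ := hcu x
  exact Opens.mem_iSup.mpr ⟨n, hx, hn⟩

section Frame

variable {L : Type*} [Order.Frame L]

lemma wedgeMap_eq_apply_comap {h : Opens ℝ → L} (hm : Monotone h) (c : ℝ) (V : Opens ℝ) :
    wedgeMap h c V = h (Opens.comap (minConst c) V) :=
  le_antisymm (iSup₂_le fun _ hU => hm fun x hx => hU ⟨x, hx, rfl⟩)
    (le_iSup₂_of_le (Opens.comap (minConst c) V) (by rintro _ ⟨x, hx, rfl⟩; exact hx) le_rfl)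

lemma forall_eq_wedgeMap_iff {f g : FrameHom (Opens ℝ) L} {c : ℝ} :
    (∀ U, g U = wedgeMap f c U) ↔ g = f.comp (Opens.comap (minConst c)) := by
  simp only [wedgeMap_eq_apply_comap (OrderHomClass.mono f), DFunLike.ext_iff,
    FrameHom.comp_apply]

lemma FrameHom.apply_inf_Oiio {f : FrameHom (Opens ℝ) L} {c : ℝ} (U : Opens ℝ) :
    f.comp (Opens.comap (minConst c)) (U ⊓ Oiio c) = f (U ⊓ Oiio c) :=
  congrArg f (comap_minConst_of_subset_Iio fun _ hx => hx.2)

lemma FrameHom.ext_of_comp_comap_minConst {c : ℕ → ℝ} (hcu : ∀ x, ∃ n, x < c n)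
    {f f' : FrameHom (Opens ℝ) L}
    (h : ∀ n, f.comp (Opens.comap (minConst (c n))) = f'.comp (Opens.comap (minConst (c n)))) :
    f = f' := by
  ext U
  rw [← iSup_inf_Oiio hcu U, map_iSup, map_iSup]
  refine iSup_congr fun n => ?_
  rw [← f.apply_inf_Oiio, h n, f'.apply_inf_Oiio]

section TruncationSequence

variable {g : ℕ → FrameHom (Opens ℝ) L} {c : ℕ → ℝ}

lemma comp_comap_minConst_of_le (hc : Monotone c)
    (hg : ∀ n, g n = (g (n + 1)).comp (Opens.comap (minConst (c n)))) {n k : ℕ} (hnk : n ≤ k) :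
    g n = (g k).comp (Opens.comap (minConst (c n))) := by
  induction k, hnk using Nat.le_induction with
  | base =>
    rw [hg n, FrameHom.comp_assoc, ← Opens.comap_comp, minConst_comp_minConst le_rfl]
  | succ k hk ih =>
    rw [ih, hg k, FrameHom.comp_assoc, ← Opens.comap_comp, minConst_comp_minConst (hc hk)]

lemma apply_inf_Oiio_of_le (hc : Monotone c)
    (hg : ∀ n, g n = (g (n + 1)).comp (Opens.comap (minConst (c n)))) {n k : ℕ} (hnk : n ≤ k)
    (U : Opens ℝ) : g n (U ⊓ Oiio (c n)) = g k (U ⊓ Oiio (c n)) := by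
  rw [comp_comap_minConst_of_le hc hg hnk, FrameHom.apply_inf_Oiio]

lemma monotone_apply_inf_Oiio (hc : Monotone c)
    (hg : ∀ n, g n = (g (n + 1)).comp (Opens.comap (minConst (c n)))) (U : Opens ℝ) :
    Monotone fun n => g n (U ⊓ Oiio (c n)) := fun n k hnk => by
  dsimp only
  rw [apply_inf_Oiio_of_le hc hg hnk]
  exact OrderHomClass.mono (g k) (inf_le_inf_left U (Set.Iio_subset_Iio (hc hnk)))

noncomputable def truncLimit (hc : Monotone c)
    (hg : ∀ n, g n = (g (n + 1)).comp (Opens.comap (minConst (c n))))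
    (htop : ⨆ n, g n (Oiio (c n)) = ⊤) : FrameHom (Opens ℝ) L where
  toFun U := ⨆ n, g n (U ⊓ Oiio (c n))
  map_inf' U V := by
    refine le_antisymm (le_inf (iSup_mono fun n => OrderHomClass.mono (g n) ?_)
      (iSup_mono fun n => OrderHomClass.mono (g n) ?_)) ?_
    · exact inf_le_inf_right _ inf_le_left
    · exact inf_le_inf_right _ inf_le_right
    rw [iSup_inf_eq]
    refine iSup_le fun m => ?_
    rw [inf_iSup_eq]
    refine iSup_le fun n => le_iSup_of_le (max m n) ?_
    calc g m (U ⊓ Oiio (c m)) ⊓ g n (V ⊓ Oiio (c n))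
        ≤ g (max m n) (U ⊓ Oiio (c (max m n))) ⊓ g (max m n) (V ⊓ Oiio (c (max m n))) :=
          inf_le_inf (monotone_apply_inf_Oiio hc hg U (le_max_left m n))
            (monotone_apply_inf_Oiio hc hg V (le_max_right m n))
      _ = g (max m n) (U ⊓ V ⊓ Oiio (c (max m n))) := by
          rw [← map_inf, inf_inf_inf_comm, inf_idem]
  map_top' := by simpa only [top_inf_eq] using htop
  map_sSup' S := by
    simp only [sSup_inf_eq, map_iSup, sSup_image]
    rw [iSup_comm]
    exact iSup_congr fun _ => iSup_comm

lemma truncLimit_apply (hc : Monotone c)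
    (hg : ∀ n, g n = (g (n + 1)).comp (Opens.comap (minConst (c n))))
    (htop : ⨆ n, g n (Oiio (c n)) = ⊤) (U : Opens ℝ) :
    truncLimit hc hg htop U = ⨆ n, g n (U ⊓ Oiio (c n)) :=
  rfl

lemma comp_comap_minConst_truncLimit (hc : Monotone c)
    (hg : ∀ n, g n = (g (n + 1)).comp (Opens.comap (minConst (c n))))
    (htop : ⨆ n, g n (Oiio (c n)) = ⊤) (n : ℕ) :
    g n = (truncLimit hc hg htop).comp (Opens.comap (minConst (c n))) := by
  ext U
  set P := Opens.comap (minConst (c n)) U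
  have hgP : ∀ {k}, n ≤ k → g n U = g k P := fun hnk => by
    rw [comp_comap_minConst_of_le hc hg hnk, FrameHom.comp_apply]
  rw [FrameHom.comp_apply, truncLimit_apply]
  refine le_antisymm ?_ (iSup_le fun k => ?_)
  · calc g n U = ⨆ m, g n U ⊓ g m (⊤ ⊓ Oiio (c m)) := by
          simp only [top_inf_eq, ← inf_iSup_eq, htop, inf_top_eq]
      _ ≤ ⨆ k, g k (P ⊓ Oiio (c k)) := iSup_le fun m => le_iSup_of_le (max m n) <| by
          rw [hgP (le_max_right m n), map_inf (g _) P]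
          exact inf_le_inf_left _ ((monotone_apply_inf_Oiio hc hg ⊤ (le_max_left m n)).trans_eq
            (congrArg (g _) (top_inf_eq _)))
  · calc g k (P ⊓ Oiio (c k)) ≤ g (max k n) (P ⊓ Oiio (c (max k n))) :=
          monotone_apply_inf_Oiio hc hg P (le_max_left k n)
      _ ≤ g n U := (hgP (le_max_right k n)).symm ▸ OrderHomClass.mono _ inf_le_left

lemma comp_comap_minConst_succ (hc : Monotone c) {f : FrameHom (Opens ℝ) L}
    (hf : ∀ n, g n = f.comp (Opens.comap (minConst (c n)))) (n : ℕ) :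
    g n = (g (n + 1)).comp (Opens.comap (minConst (c n))) := by
  rw [hf n, hf (n + 1), FrameHom.comp_assoc, ← Opens.comap_comp,
    minConst_comp_minConst (hc n.le_succ)]

lemma iSup_apply_Oiio_eq_top (hcu : ∀ x, ∃ n, x < c n) {f : FrameHom (Opens ℝ) L}
    (hf : ∀ n, g n = f.comp (Opens.comap (minConst (c n)))) :
    ⨆ n, g n (Oiio (c n)) = ⊤ := by
  simp_rw [hf, FrameHom.comp_apply, comap_minConst_Oiio le_rfl, ← map_iSup]
  simpa only [top_inf_eq, map_top] using congrArg f (iSup_inf_Oiio hcu ⊤)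

end TruncationSequence

end Frame

/-- A sequence `(gₙ)_{n ≥ 1}` of positive elements of `R₀L` (here `g n`
denotes `g_{n+1}`) satisfies (1) `gₙ = g_{n+1} ∧ n` for all `n` and
(2) `⋁ₙ gₙ(-∞, n) = ⊤` iff it is the truncation sequence of some (unique)
`g₀ ∈ R₀L`, i.e. `gₙ = g₀ ∧ n` for all `n`. -/
theorem stmt17 (L : Type*) [Order.Frame L]
    (g : ℕ → FrameHom (Opens ℝ) L)
    (hpos : ∀ n, g n (Oiio 0) = ⊥) :
    ((∀ n : ℕ, ∀ U : Opens ℝ, g n U = wedgeMap (g (n + 1)) ((n : ℝ) + 1) U) ∧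
      ⨆ n : ℕ, g n (Oiio ((n : ℝ) + 1)) = ⊤) ↔
      ∃! g₀ : FrameHom (Opens ℝ) L,
        g₀ (Oiio 0) = ⊥ ∧ ∀ n : ℕ, ∀ U : Opens ℝ, g n U = wedgeMap g₀ ((n : ℝ) + 1) U := by
  have hc : Monotone fun n : ℕ => (n : ℝ) + 1 := Nat.mono_cast.add_const 1
  have hcu : ∀ x : ℝ, ∃ n : ℕ, x < n + 1 := fun x =>
    (exists_nat_gt x).imp fun n hn => hn.trans (lt_add_one _)
  simp only [forall_eq_wedgeMap_iff]
  constructor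
  · rintro ⟨hg, htop⟩
    have hlim := comp_comap_minConst_truncLimit hc hg htop
    refine ⟨truncLimit hc hg htop, ⟨?_, hlim⟩, fun f hf => ?_⟩
    · rw [← comap_minConst_Oiio (c := (0 : ℕ) + 1) (by norm_num), ← FrameHom.comp_apply,
        ← hlim 0, hpos]
    · exact FrameHom.ext_of_comp_comap_minConst hcu fun n => (hf.2 n).symm.trans (hlim n)
  · rintro ⟨f, ⟨-, hf⟩, -⟩
    exact ⟨comp_comap_minConst_succ hc hf, iSup_apply_Oiio_eq_top hcu hf⟩
end

section
/- If (f_n) is a good sequence in a trunc (each f_n is in the range of the truncation, f_n = (f_n + f_{n+1})̄ for all n, and f_n decreases pointwise to 0), then the partial sums g_m := Σ_{n=1}^m f_n satisfy g_m = g_{m+1} ∧ m for all m; in particular, the map from good sequences to truncation sequences via partial sums composed with the map from truncation sequences to good sequences via differences is the identity. -/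
open TopologicalSpace

/-- The addition operation on frame-valued functions on `𝒪ℝ`, induced by the
continuous map `(x, y) ↦ x + y`:
`(f + g)(V) = ⋁_{U₁ + U₂ ⊆ V} (f(U₁) ⊓ g(U₂))`. -/
noncomputable def plusMap {L : Type*} [Order.Frame L] (f g : Opens ℝ → L)
    (V : Opens ℝ) : L :=
  ⨆ U₁ : Opens ℝ, ⨆ U₂ : Opens ℝ,
    ⨆ _ : ∀ x ∈ (U₁ : Set ℝ), ∀ y ∈ (U₂ : Set ℝ), x + y ∈ (V : Set ℝ),
      f U₁ ⊓ g U₂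

open Classical in
/-- The zero element of `R₀L`, viewed as a frame-valued function on `𝒪ℝ`. -/
noncomputable def zeroMap {L : Type*} [Order.Frame L] (V : Opens ℝ) : L :=
  if (0 : ℝ) ∈ (V : Set ℝ) then ⊤ else ⊥

/-- Finite partial sums `f 0 + ⋯ + f (m-1)` of a sequence of frame-valued
functions on `𝒪ℝ`. -/
noncomputable def sumMap {L : Type*} [Order.Frame L] (f : ℕ → Opens ℝ → L) :
    ℕ → Opens ℝ → L
  | 0 => zeroMap
  | m + 1 => plusMap (sumMap f m) (f m)


/-!
Write `g = f₀ + ⋯ + f_{m-1}` and `h = f_m`. Pointwise the claim is `min (g + h) m = g`, which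
holds because `0 ≤ g ≤ m` and `g = m` wherever `h > 0`: goodness says
`f_n = min (f_n + f_{n+1}) 1`, so `f_{n+1} > 0` forces `f_n = 1`, and this propagates down the
sequence. In `R₀L` these facts become "`g` takes values in `[0, m]`" and "over `h (0, ∞)`, `g`
takes values in `{m}`" (`ValuedInIcc`). For `(g + h) ∧ m ≤ g`, a pair `U₁ + U₂ ⊆ U` is split
according to whether `0 ∈ U₂`, in which case `U₁ ⊆ U`, or `U₂ ⊆ (-∞, 0) ∪ (0, ∞)`, in which case
`h > 0` and `g` lives near `m`. For `g ≤ (g + h) ∧ m`, `g` is localised to small balls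
and `⊤` is covered by `h (-ε, ε) ⊔ h (0, ∞)`.
-/

open Set Metric
open scoped Pointwise

def Oball (x ε : ℝ) : Opens ℝ := ⟨ball x ε, isOpen_ball⟩

@[simp]
lemma coe_Oball (x ε : ℝ) : (Oball x ε : Set ℝ) = ball x ε := rfl

/-- Over `u ∈ L`, the frame-valued function `g` takes its values in `[a, b]`. For a frame
homomorphism this says `u ≤ g (a - ε, b + ε)` for all `ε > 0`; the stronger form is what
survives addition. -/
def ValuedInIcc {L : Type*} [Order.Frame L] (u : L) (g : Opens ℝ → L) (a b : ℝ) : Prop :=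
  ∀ ε > 0, ∀ U : Opens ℝ, u ⊓ g U ≤ g (U ⊓ Oioo (a - ε) (b + ε))

section FrameHom

variable {L : Type*} [Order.Frame L] (f : FrameHom (Opens ℝ) L)

lemma map_le_of_subset_union {A U W : Opens ℝ} (hA : f A = ⊥)
    (h : (U : Set ℝ) ⊆ A ∪ W) : f U ≤ f W := by
  calc f U ≤ f (A ⊔ W) := OrderHomClass.mono f (SetLike.coe_subset_coe.1 (by simpa using h))
    _ = f W := by rw [map_sup, hA, bot_sup_eq]

lemma map_le_of_forall_ball_le {U : Opens ℝ} {c : L}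
    (h : ∀ x ε, 0 < ε → ball x (2 * ε) ⊆ U → f (Oball x ε) ≤ c) : f U ≤ c := by
  let balls : {p : ℝ × ℝ // 0 < p.2 ∧ ball p.1 (2 * p.2) ⊆ U} → Opens ℝ :=
    fun p => Oball p.1.1 p.1.2
  have hU : U ≤ ⨆ p, balls p := by
    intro x hx
    obtain ⟨κ, hκ, hball⟩ := isOpen_iff.1 U.2 x hx
    rw [Opens.mem_iSup]
    refine ⟨⟨(x, κ / 2), half_pos hκ, by rwa [mul_div_cancel₀ _ two_ne_zero]⟩, ?_⟩
    exact mem_ball_self (half_pos hκ)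
  calc f U ≤ f (⨆ p, balls p) := OrderHomClass.mono f hU
    _ ≤ c := by
      rw [map_iSup]
      exact iSup_le fun p => h _ _ p.2.1 p.2.2

lemma map_Oioi_le_of_forall {a : ℝ} {c : L} (h : ∀ δ, a < δ → f (Oioi δ) ≤ c) :
    f (Oioi a) ≤ c := by
  refine map_le_of_forall_ball_le f fun x ε hε hx => ?_
  have hxa : a < x - ε := by
    have hmem : x - 3 / 2 * ε ∈ ball x (2 * ε) := by
      rw [Real.ball_eq_Ioo]; constructor <;> linarith
    have : a < x - 3 / 2 * ε := hx hmem
    linarith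
  refine (OrderHomClass.mono f fun y (hy : y ∈ ball x ε) => ?_).trans (h _ hxa)
  rw [Real.ball_eq_Ioo] at hy
  exact hy.1

lemma map_Oball_zero_sup_map_Oioi_zero (hf : f (Oiio 0) = ⊥) {ε : ℝ} (hε : 0 < ε) :
    f (Oball 0 ε) ⊔ f (Oioi 0) = ⊤ := by
  rw [← map_sup, eq_top_iff, ← map_top f]
  refine map_le_of_subset_union f hf fun x _ => ?_
  rcases lt_trichotomy x 0 with hx | hx | hx
  · exact Or.inl hx
  · exact Or.inr (Or.inl (by simp [Oball, hx, hε]))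
  · exact Or.inr (Or.inr hx)

lemma ValuedInIcc.of_le {u : L} {a b : ℝ} (h : ∀ ε > 0, u ≤ f (Oioo (a - ε) (b + ε))) :
    ValuedInIcc u f a b := fun ε hε U => by
  rw [map_inf, inf_comm (f U)]
  exact inf_le_inf_right _ (h ε hε)

end FrameHom

section PlusWedge

variable {L : Type*} [Order.Frame L] {g h : Opens ℝ → L}

lemma le_plusMap {U₁ U₂ V : Opens ℝ} (hV : (U₁ : Set ℝ) + U₂ ⊆ V) :
    g U₁ ⊓ h U₂ ≤ plusMap g h V :=
  le_iSup_of_le U₁ <| le_iSup_of_le U₂ <| le_iSup_of_le (add_subset_iff.1 hV) le_rfl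

lemma plusMap_le {V : Opens ℝ} {c : L}
    (hc : ∀ U₁ U₂ : Opens ℝ, (U₁ : Set ℝ) + U₂ ⊆ V → g U₁ ⊓ h U₂ ≤ c) : plusMap g h V ≤ c :=
  iSup₂_le fun U₁ U₂ => iSup_le fun hV => hc U₁ U₂ (add_subset_iff.2 hV)

lemma plusMap_mono : Monotone (plusMap g h) := fun _ _ hVW =>
  plusMap_le fun _ _ hV => le_plusMap (hV.trans hVW)

lemma plusMap_bot (hg : g ⊥ = ⊥) (hh : h ⊥ = ⊥) : plusMap g h ⊥ = ⊥ := by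
  refine le_bot_iff.1 (plusMap_le fun U₁ U₂ hU => ?_)
  have : U₁ = ⊥ ∨ U₂ = ⊥ := by
    rcases (U₁ : Set ℝ).eq_empty_or_nonempty with h1 | ⟨x, hx⟩
    · left; ext y; simp [h1]
    · right; ext y; simpa using fun hy => hU (add_mem_add hx hy)
  rcases this with rfl | rfl <;> simp [hg, hh]

lemma ValuedInIcc.plusMap {u : L} {a b a' b' : ℝ} (hg : ValuedInIcc u g a b)
    (hh : ValuedInIcc u h a' b') : ValuedInIcc u (plusMap g h) (a + a') (b + b') := by
  intro ε hε V
  rw [inf_comm, ← le_himp_iff]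
  refine plusMap_le fun U₁ U₂ hU => ?_
  rw [le_himp_iff, inf_comm, inf_inf_distrib_left]
  refine (inf_le_inf (hg _ (half_pos hε) U₁) (hh _ (half_pos hε) U₂)).trans (le_plusMap ?_)
  rintro _ ⟨x, ⟨hxU, hx⟩, y, ⟨hyU, hy⟩, rfl⟩
  refine ⟨hU (add_mem_add hxU hyU), ?_⟩
  simp only [Oioo, Opens.coe_mk, mem_Ioo] at hx hy ⊢
  constructor <;> linarith [hx.1, hx.2, hy.1, hy.2]

lemma le_wedgeMap {U V : Opens ℝ} {c : ℝ} (hU : (fun x => min x c) '' U ⊆ V) :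
    g U ≤ wedgeMap g c V :=
  le_iSup_of_le U <| le_iSup_of_le hU le_rfl

lemma wedgeMap_le {V : Opens ℝ} {c : ℝ} {a : L}
    (ha : ∀ U : Opens ℝ, (fun x => min x c) '' U ⊆ V → g U ≤ a) : wedgeMap g c V ≤ a :=
  iSup₂_le ha

lemma wedgeMap_Oioi_self (hg : g ⊥ = ⊥) (c : ℝ) : wedgeMap g c (Oioi c) = ⊥ := by
  refine le_bot_iff.1 (wedgeMap_le fun U hU => ?_)
  have : U = ⊥ := by
    ext x
    simpa using fun hx => (hU ⟨x, hx, rfl⟩ : c < min x c).not_ge (min_le_right x c)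
  rw [this, hg]

end PlusWedge

section SumMap

variable {L : Type*} [Order.Frame L]

lemma ValuedInIcc.inf_le {u : L} {g : Opens ℝ → L} {a b ε : ℝ} (hg : ValuedInIcc u g a b)
    (hmono : Monotone g) (hε : 0 < ε) {U W : Opens ℝ}
    (hW : (U : Set ℝ) ∩ Ioo (a - ε) (b + ε) ⊆ W) : u ⊓ g U ≤ g W :=
  (hg ε hε U).trans (hmono hW)

lemma zeroMap_mono : Monotone (zeroMap : Opens ℝ → L) := fun V W hVW => by
  unfold zeroMap
  split_ifs with hV hW
  · exact le_rfl
  · exact absurd (hVW hV) hW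
  · exact bot_le
  · exact le_rfl

lemma sumMap_mono (f : ℕ → Opens ℝ → L) : ∀ m, Monotone (sumMap f m)
  | 0 => zeroMap_mono
  | _ + 1 => plusMap_mono

lemma sumMap_bot {f : ℕ → Opens ℝ → L} (hf : ∀ n, f n ⊥ = ⊥) : ∀ m, sumMap f m ⊥ = ⊥
  | 0 => if_neg (notMem_empty 0)
  | m + 1 => plusMap_bot (sumMap_bot hf m) (hf m)

lemma ValuedInIcc.zeroMap (u : L) : ValuedInIcc u zeroMap 0 0 := fun ε hε V => by
  unfold _root_.zeroMap
  by_cases hV : (0 : ℝ) ∈ (V : Set ℝ)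
  · have h0 : (0 : ℝ) ∈ ((V ⊓ Oioo (0 - ε) (0 + ε) : Opens ℝ) : Set ℝ) :=
      ⟨hV, by simp [Oioo, hε]⟩
    rw [if_pos h0]
    exact le_top
  · rw [if_neg hV, inf_bot_eq]
    exact bot_le

lemma ValuedInIcc.sumMap {u : L} {f : ℕ → Opens ℝ → L} {a b : ℝ} :
    ∀ m : ℕ, (∀ n < m, ValuedInIcc u (f n) a b) →
      ValuedInIcc u (sumMap f m) (m * a) (m * b)
  | 0, _ => by rw [Nat.cast_zero, zero_mul, zero_mul]; exact ValuedInIcc.zeroMap u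
  | m + 1, hf => by
    have := (ValuedInIcc.sumMap m fun n hn => hf n (hn.trans m.lt_succ_self)).plusMap
      (hf m m.lt_succ_self)
    rwa [← add_one_mul, ← add_one_mul, ← Nat.cast_add_one] at this

lemma sumMap_le_of_forall_ball_le (f : ℕ → FrameHom (Opens ℝ) L) :
    ∀ (m : ℕ) {V : Opens ℝ} {c : L},
      (∀ x ε, 0 < ε → ball x (2 * ε) ⊆ V → sumMap (fun n => ⇑(f n)) m (Oball x ε) ≤ c) →
      sumMap (fun n => ⇑(f n)) m V ≤ c
  | 0, V, c, h => by
    unfold sumMap zeroMap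
    split_ifs with hV
    · obtain ⟨κ, hκ, hball⟩ := isOpen_iff.1 V.2 0 hV
      have := h 0 (κ / 2) (half_pos hκ) (by rwa [mul_div_cancel₀ _ two_ne_zero])
      have h0 : (0 : ℝ) ∈ (Oball 0 (κ / 2) : Set ℝ) := mem_ball_self (half_pos hκ)
      rwa [sumMap, zeroMap, if_pos h0] at this
    · exact bot_le
  | m + 1, V, c, h => by
    refine plusMap_le fun U₁ U₂ hU => ?_
    -- through `⇨`, the bound on `sumMap m U₁ ⊓ f m U₂` is reduced to one factor at a time
    rw [← le_himp_iff]
    refine sumMap_le_of_forall_ball_le f m fun x ε hε hx => ?_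
    rw [le_himp_iff, inf_comm, ← le_himp_iff]
    refine map_le_of_forall_ball_le (f m) fun y δ hδ hy => ?_
    rw [le_himp_iff, inf_comm]
    refine (le_plusMap ?_).trans (h (x + y) (ε + δ) (add_pos hε hδ) ?_)
    · exact (ball_add_ball hε hδ x y).le
    · rw [mul_add, ← ball_add_ball (by positivity) (by positivity)]
      exact (add_subset_add hx hy).trans hU

end SumMap

lemma exists_inter_Iio_subset_of_min_image_subset {U V : Set ℝ} {c : ℝ} (hV : IsOpen V)
    (h : (fun x => min x c) '' U ⊆ V) : ∃ ε > 0, U ∩ Iio (c + ε) ⊆ V := by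
  have hle : ∀ z ∈ U, z ≤ c → z ∈ V := fun z hz hzc => by
    simpa [min_eq_left hzc] using h ⟨z, hz, rfl⟩
  by_cases hc : c ∈ V
  · obtain ⟨κ, hκ, hball⟩ := isOpen_iff.1 hV c hc
    refine ⟨κ, hκ, fun z ⟨hzU, hz⟩ => ?_⟩
    rcases le_total z c with hzc | hzc
    · exact hle z hzU hzc
    · refine hball ?_
      rw [Real.ball_eq_Ioo]
      exact ⟨by linarith, hz⟩
  · refine ⟨1, one_pos, fun z ⟨hzU, _⟩ => ?_⟩
    rcases le_total z c with hzc | hzc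
    · exact hle z hzU hzc
    · exact absurd (by simpa [min_eq_right hzc] using h ⟨z, hzU, rfl⟩) hc

lemma exists_inter_Ioo_subset_of_min_image_subset {U₁ U₂ U V : Set ℝ} {c y : ℝ}
    (hV : IsOpen V) (hU : U₁ + U₂ ⊆ U) (h : (fun x => min x c) '' U ⊆ V)
    (hy : y ∈ U₂) (hy0 : 0 < y) : ∃ δ > 0, U₁ ∩ Ioo (c - δ) (c + δ) ⊆ V := by
  by_cases hc : c ∈ V
  · obtain ⟨κ, hκ, hball⟩ := isOpen_iff.1 hV c hc
    refine ⟨κ, hκ, fun z hz => hball ?_⟩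
    rw [Real.ball_eq_Ioo]
    exact hz.2
  · refine ⟨y, hy0, fun z ⟨hzU, hz⟩ => absurd ?_ hc⟩
    have hzy : c ≤ z + y := by linarith [hz.1]
    simpa [min_eq_right hzy] using h ⟨z + y, hU (add_mem_add hzU hy), rfl⟩

section Truncation

variable {L : Type*} [Order.Frame L] {g : Opens ℝ → L} {h : FrameHom (Opens ℝ) L} {a c : ℝ}

lemma wedgeMap_plusMap_le (hmono : Monotone g) (hh : h (Oiio 0) = ⊥)
    (hbound : ValuedInIcc ⊤ g a c) (hsat : ValuedInIcc (h (Oioi 0)) g c c) (V : Opens ℝ) :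
    wedgeMap (plusMap g h) c V ≤ g V := by
  refine wedgeMap_le fun U hU => plusMap_le fun U₁ U₂ hU₁₂ => ?_
  by_cases h0 : (0 : ℝ) ∈ (U₂ : Set ℝ)
  · have hU₁ : U₁ ≤ U := fun x hx => by simpa using hU₁₂ (add_mem_add hx h0)
    obtain ⟨ε, hε, hεV⟩ := exists_inter_Iio_subset_of_min_image_subset V.2 hU
    calc g U₁ ⊓ h U₂ ≤ ⊤ ⊓ g U := by simpa using inf_le_left.trans (hmono hU₁)
      _ ≤ g V := hbound.inf_le hmono hε fun z hz => hεV ⟨hz.1, hz.2.2⟩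
  have hpos : h U₂ ≤ h (Oioi 0) := map_le_of_subset_union h hh fun y hy =>
    lt_or_gt_of_ne (ne_of_mem_of_not_mem hy h0)
  by_cases hne : ∃ y ∈ (U₂ : Set ℝ), 0 < y
  · obtain ⟨y, hy, hy0⟩ := hne
    obtain ⟨δ, hδ, hδV⟩ := exists_inter_Ioo_subset_of_min_image_subset V.2 hU₁₂ hU hy hy0
    calc g U₁ ⊓ h U₂ ≤ h (Oioi 0) ⊓ g U₁ := by rw [inf_comm]; exact inf_le_inf_right _ hpos
      _ ≤ g V := hsat.inf_le hmono hδ hδV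
  · push Not at hne
    have hneg : h U₂ = ⊥ := by
      refine le_bot_iff.1 (hh ▸ OrderHomClass.mono h fun y hy => ?_)
      exact (hne y hy).lt_of_ne (ne_of_mem_of_not_mem hy h0)
    simp [hneg]

lemma le_wedgeMap_plusMap_of_ball (hmono : Monotone g) (hbot : g ⊥ = ⊥)
    (hh : h (Oiio 0) = ⊥) (hbound : ValuedInIcc ⊤ g a c)
    (hsat : ValuedInIcc (h (Oioi 0)) g c c) {x ε : ℝ} (hε : 0 < ε) {V : Opens ℝ}
    (hV : ball x (2 * ε) ⊆ V) : g (Oball x ε) ≤ wedgeMap (plusMap g h) c V := by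
  rcases le_or_gt c (x - 2 * ε) with hcx | hcx
  -- the ball lies above `c`, where `g` vanishes
  · calc g (Oball x ε) = ⊤ ⊓ g (Oball x ε) := (top_inf_eq _).symm
      _ ≤ g ⊥ := hbound.inf_le hmono hε fun z ⟨hz, hz'⟩ => by
          simp only [coe_Oball, Real.ball_eq_Ioo, mem_Ioo] at hz hz'
          linarith
      _ ≤ _ := hbot ▸ bot_le
  calc g (Oball x ε) = g (Oball x ε) ⊓ (h (Oball 0 ε) ⊔ h (Oioi 0)) := by
        rw [map_Oball_zero_sup_map_Oioi_zero h hh hε, inf_top_eq]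
    _ = g (Oball x ε) ⊓ h (Oball 0 ε) ⊔ h (Oioi 0) ⊓ g (Oball x ε) := by
        rw [inf_sup_left, inf_comm (g (Oball x ε)) (h (Oioi 0))]
    _ ≤ _ := sup_le ?_ ?_
  · refine (le_plusMap (V := Oball x (2 * ε)) ?_).trans (le_wedgeMap ?_)
    · simpa [two_mul] using (ball_add_ball hε hε x 0).le
    · rintro _ ⟨z, hz, rfl⟩
      simp only [coe_Oball, Real.ball_eq_Ioo, mem_Ioo] at hz
      refine hV ?_
      rw [Real.ball_eq_Ioo]
      exact ⟨lt_min hz.1 hcx, (min_le_left z c).trans_lt hz.2⟩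
  rcases le_or_gt (x + 2 * ε) c with hxc | hxc
  -- over `h (0, ∞)` the values of `g` are near `c`, away from the ball
  · calc h (Oioi 0) ⊓ g (Oball x ε) ≤ g ⊥ := hsat.inf_le hmono hε fun z ⟨hz, hz'⟩ => by
          simp only [coe_Oball, Real.ball_eq_Ioo, mem_Ioo] at hz hz'
          linarith
      _ ≤ _ := hbot ▸ bot_le
  rw [inf_comm]
  refine (le_plusMap (V := Oioi (x - ε)) ?_).trans (le_wedgeMap ?_)
  · rintro _ ⟨z, hz, y, hy, rfl⟩
    simp only [coe_Oball, Real.ball_eq_Ioo, mem_Ioo, Oioi, Opens.coe_mk, mem_Ioi] at hz hy ⊢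
    linarith
  · rintro _ ⟨z, hz, rfl⟩
    simp only [Oioi, Opens.coe_mk, mem_Ioi] at hz
    refine hV ?_
    rw [Real.ball_eq_Ioo]
    exact ⟨lt_min (by linarith) hcx, (min_le_right z c).trans_lt hxc⟩

end Truncation

section GoodSequence

variable {L : Type*} [Order.Frame L]

lemma map_Oioi_one_eq_bot (f : FrameHom (Opens ℝ) L) (htrunc : ∀ U, f U = truncMap f U) :
    f (Oioi 1) = ⊥ :=
  (htrunc _).trans (wedgeMap_Oioi_self (map_bot f) 1)

lemma valuedInIcc_zero_one (f : FrameHom (Opens ℝ) L) (h0 : f (Oiio 0) = ⊥)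
    (h1 : f (Oioi 1) = ⊥) : ValuedInIcc ⊤ f 0 1 := by
  refine ValuedInIcc.of_le f fun ε hε => ?_
  rw [← map_top f]
  refine (map_le_of_subset_union f h0 (W := Oioo (0 - ε) (1 + ε) ⊔ Oioi 1) ?_).trans ?_
  · intro x _
    simp only [Oiio, Oioo, Oioi, Opens.coe_sup, Opens.coe_mk, mem_union, mem_Iio, mem_Ioo,
      mem_Ioi]
    by_cases hx0 : x < 0
    · exact Or.inl hx0
    · by_cases hx1 : 1 < x
      · exact Or.inr (Or.inr hx1)
      · exact Or.inr (Or.inl ⟨by linarith, by linarith⟩)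
  · rw [map_sup, h1, sup_bot_eq]

lemma valuedInIcc_one_one {f : FrameHom (Opens ℝ) L} {u : L} (h1 : f (Oioi 1) = ⊥)
    (hu : ∀ r < 1, u ≤ f (Oioi r)) : ValuedInIcc u f 1 1 := by
  refine ValuedInIcc.of_le f fun ε hε => (hu (1 - ε) (by linarith)).trans ?_
  refine map_le_of_subset_union f h1 fun x (hx : 1 - ε < x) => ?_
  by_cases hx1 : 1 < x
  · exact Or.inl hx1
  · exact Or.inr ⟨hx, by linarith⟩

lemma map_Oioi_inf_le_of_good {g h : Opens ℝ → L}
    (hgood : ∀ U, g U = truncMap (plusMap g h) U) {r δ : ℝ} (hrδ : r + δ < 1) :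
    g (Oioi r) ⊓ h (Oioi δ) ≤ g (Oioi (r + δ)) := by
  rw [hgood (Oioi (r + δ))]
  refine (le_plusMap (V := Oioi (r + δ)) ?_).trans (le_wedgeMap (c := 1) ?_)
  · rintro _ ⟨x, hx, y, hy, rfl⟩
    exact add_lt_add (show r < x from hx) (show δ < y from hy)
  · rintro _ ⟨x, hx, rfl⟩
    exact lt_min hx hrδ

lemma map_Oioi_le_of_good {g h : FrameHom (Opens ℝ) L}
    (hgood : ∀ U, g U = truncMap (plusMap g h) U) (hdec : ∀ r, h (Oioi r) ≤ g (Oioi r))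
    {r : ℝ} (hr : r < 1) : h (Oioi 0) ≤ g (Oioi r) := by
  refine map_Oioi_le_of_forall h fun δ hδ => ?_
  -- where `h > δ`, goodness turns `g > s - δ` into `g > s`; start from `s ≤ 0` and iterate
  have hstep : ∀ k : ℕ, ∀ s < 1, s ≤ k * δ → h (Oioi δ) ≤ g (Oioi s) := by
    intro k
    induction k with
    | zero =>
      intro s _ hs
      rw [Nat.cast_zero, zero_mul] at hs
      exact (hdec δ).trans (OrderHomClass.mono g (Ioi_subset_Ioi (hs.trans hδ.le)))
    | succ k ih =>
      intro s hs hsk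
      calc h (Oioi δ) ≤ g (Oioi (s - δ)) ⊓ h (Oioi δ) :=
            le_inf (ih _ (by linarith) (by push_cast at hsk; linarith)) le_rfl
        _ ≤ g (Oioi s) := by
            simpa using map_Oioi_inf_le_of_good hgood (r := s - δ) (δ := δ) (by linarith)
  obtain ⟨k, hk⟩ := exists_nat_ge (r / δ)
  exact hstep k r hr (by rwa [div_le_iff₀ hδ] at hk)

lemma map_Oioi_zero_le_of_lt (f : ℕ → FrameHom (Opens ℝ) L)
    (hgood : ∀ n U, f n U = truncMap (plusMap (f n) (f (n + 1))) U)
    (hdec : ∀ n r, f (n + 1) (Oioi r) ≤ f n (Oioi r)) {j k : ℕ} (hjk : j < k) {r : ℝ}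
    (hr : r < 1) : f k (Oioi 0) ≤ f j (Oioi r) := by
  induction k, hjk using Nat.le_induction with
  | base => exact map_Oioi_le_of_good (hgood j) (hdec j) hr
  | succ k _ ih => exact (map_Oioi_le_of_good (hgood k) (hdec k) zero_lt_one).trans ih

end GoodSequence

theorem stmt18_general (L : Type*) [Order.Frame L]
    (f : ℕ → FrameHom (Opens ℝ) L)
    (hpos : ∀ n, f n (Oiio 0) = ⊥)
    (htrunc : ∀ n, ∀ U : Opens ℝ, f n U = truncMap (⇑(f n)) U)
    (hgood : ∀ n, ∀ U : Opens ℝ,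
      f n U = truncMap (plusMap (⇑(f n)) (⇑(f (n + 1)))) U)
    (hdec : ∀ n (r : ℝ), f (n + 1) (Oioi r) ≤ f n (Oioi r)) :
    ∀ m : ℕ, ∀ V : Opens ℝ,
      sumMap (fun n => ⇑(f n)) m V
        = wedgeMap (sumMap (fun n => ⇑(f n)) (m + 1)) (m : ℝ) V := by
  intro m V
  have h1 : ∀ n, f n (Oioi 1) = ⊥ := fun n => map_Oioi_one_eq_bot (f n) (htrunc n)
  have hbound : ValuedInIcc ⊤ (sumMap (fun n => ⇑(f n)) m) 0 m := by
    simpa using ValuedInIcc.sumMap m fun n _ => valuedInIcc_zero_one (f n) (hpos n) (h1 n)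
  have hsat : ValuedInIcc (f m (Oioi 0)) (sumMap (fun n => ⇑(f n)) m) m m := by
    simpa using ValuedInIcc.sumMap m fun n hn =>
      valuedInIcc_one_one (h1 n) fun r hr => map_Oioi_zero_le_of_lt f hgood hdec hn hr
  have hmono := sumMap_mono (fun n => ⇑(f n)) m
  refine le_antisymm (sumMap_le_of_forall_ball_le f m fun x ε hε hx => ?_)
    (wedgeMap_plusMap_le hmono (hpos m) hbound hsat V)
  exact le_wedgeMap_plusMap_of_ball hmono (sumMap_bot (fun n => map_bot (f n)) m) (hpos m)
    hbound hsat hε hx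

/-- If `(fₙ)` is a good sequence in `R₀L` (each `fₙ` is a fixed point of the
truncation, `fₙ = (fₙ + f_{n+1})‾`, and `fₙ` decreases pointwise to `0`), then
the partial sums `g_m := f₁ + ⋯ + f_m` satisfy `g_m = g_{m+1} ∧ m` for all `m`;
i.e., the partial sums of a good sequence form a truncation sequence (so the
composite good sequences → truncation sequences → good sequences is the
identity). Here `f n` denotes `f_{n+1}`. -/
theorem stmt18 (L : Type*) [Order.Frame L]
    (f : ℕ → FrameHom (Opens ℝ) L)
    (hpos : ∀ n, f n (Oiio 0) = ⊥)
    (htrunc : ∀ n, ∀ U : Opens ℝ, f n U = truncMap (⇑(f n)) U)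
    (hgood : ∀ n, ∀ U : Opens ℝ,
      f n U = truncMap (plusMap (⇑(f n)) (⇑(f (n + 1)))) U)
    (hdec : ∀ n (r : ℝ), f (n + 1) (Oioi r) ≤ f n (Oioi r))
    (hto0 : ∀ ε : ℝ, 0 < ε → ⨆ n, f n (Oiio ε) = ⊤) :
    ∀ m : ℕ, ∀ V : Opens ℝ,
      sumMap (fun n => ⇑(f n)) m V
        = wedgeMap (sumMap (fun n => ⇑(f n)) (m + 1)) (m : ℝ) V :=
  stmt18_general L f hpos htrunc hgood hdec
end
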